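/- arXiv:2503.19035 — 12 statements merged into one kernel-verified Lean document; each statement's English description precedes it below -/
import Mathlib

section
/- Summing over all overlap offsets: for two words U, V of length ℓ over a q-letter alphabet, ∑_{j=1}^{ℓ-1} E[1{W_i = U}·1{W_{i+j} = V}] = q^{-ℓ}·θ_{UV}, where θ_{UV} = ∑_{k ∈ Θ(U,V)} q^{k-ℓ}. -/
/-!
Both windows are fixed at once exactly when the length-`ℓ - j` suffix of `U` agrees with the
length-`ℓ - j` prefix of `V`, and then the event says that the `j + ℓ` letters starting at `i`
spell the first `j` letters of `U` followed by `V`; by independence it has probability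
`q^{-(j + ℓ)}`. Substituting `k = ℓ - j` turns the sum over offsets into `q^{-ℓ} θ_{UV}`.
-/

open MeasureTheory ProbabilityTheory

/-- The length-`k` suffix of `U` equals the length-`k` prefix of `V`. -/
def OverlapAt {A : Type*} (ℓ k : ℕ) (U V : Fin ℓ → A) : Prop :=
  ∀ (i : ℕ) (_ : i < k) (h : ℓ - k + i < ℓ), U ⟨ℓ - k + i, h⟩ = V ⟨i, by omega⟩

open Classical in
/-- The overlap index `θ_{UV} = ∑_{k ∈ Θ(U,V)} q^{k-ℓ}`. -/
noncomputable def theta {A : Type*} (q ℓ : ℕ) (U V : Fin ℓ → A) : ℝ :=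
  ∑ k ∈ Finset.Ico 1 ℓ, if OverlapAt ℓ k U V then (q : ℝ) ^ ((k : ℤ) - ℓ) else 0

section Words

variable {A : Type*} {ℓ : ℕ}

theorem overlapAt_iff {U V : Fin ℓ → A} {j : ℕ} (hj : j ≤ ℓ) :
    OverlapAt ℓ (ℓ - j) U V ↔ ∀ t (ht : j + t < ℓ), U ⟨j + t, ht⟩ = V ⟨t, by omega⟩ := by
  constructor
  · intro h t ht
    simpa [Nat.sub_sub_self hj] using h t (by omega) (by omega)
  · intro h t ht ht'
    simpa [Nat.sub_sub_self hj] using h t (by omega)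

theorem window_eq_and_window_eq_iff (x : ℕ → A) (i : ℕ) {j : ℕ} (hj : j ≤ ℓ)
    (U V : Fin ℓ → A) :
    ((fun s : Fin ℓ => x (i + s)) = U ∧ (fun s : Fin ℓ => x (i + j + s)) = V) ↔
      OverlapAt ℓ (ℓ - j) U V ∧
        (fun s : Fin (j + ℓ) => x (i + s)) =
          Fin.append (fun s : Fin j => U (Fin.castLE hj s)) V := by
  simp only [funext_iff, Fin.forall_fin_add, Fin.append_left, Fin.append_right, Fin.val_castAdd,
    Fin.val_natAdd, ← add_assoc]
  constructor
  · rintro ⟨hU, hV⟩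
    refine ⟨(overlapAt_iff hj).2 fun t ht => ?_, fun s => hU (Fin.castLE hj s), hV⟩
    rw [← hU, ← hV, Fin.val_mk, Fin.val_mk, add_assoc]
  · rintro ⟨hov, hU, hV⟩
    refine ⟨fun s => ?_, hV⟩
    by_cases hs : (s : ℕ) < j
    · exact hU ⟨s, hs⟩
    · obtain ⟨t, ht⟩ := Nat.exists_eq_add_of_le (not_lt.1 hs)
      obtain ⟨s, hs'⟩ := s
      subst ht
      rw [(overlapAt_iff hj).1 hov t hs', ← hV ⟨t, by omega⟩, add_assoc]

end Words

section Probability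

variable {A Ω : Type*} [MeasurableSpace A] [MeasurableSingletonClass A] [MeasurableSpace Ω]
  {μ : Measure Ω} {q : ℕ} {ξ : ℕ → Ω → A}

theorem measure_forall_eq_of_iIndepFun {ι : Type*} [Fintype ι] {g : ι → ℕ} {p : ENNReal}
    (hg : Function.Injective g) (hindep : iIndepFun ξ μ)
    (hunif : ∀ k a, μ {ω | ξ k ω = a} = p) (w : ι → A) :
    μ {ω | ∀ s, ξ (g s) ω = w s} = p ^ Fintype.card ι := by
  have hset : {ω | ∀ s, ξ (g s) ω = w s} = ⋂ s, ξ (g s) ⁻¹' {w s} := by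
    ext ω
    simp
  rw [hset, (hindep.precomp hg).meas_iInter fun s => ⟨{w s}, measurableSet_singleton _, rfl⟩]
  simp only [Set.preimage, Set.mem_singleton_iff, hunif, Finset.prod_const, Finset.card_univ]

theorem measureReal_window_eq (hindep : iIndepFun ξ μ)
    (hunif : ∀ k a, μ {ω | ξ k ω = a} = (q : ENNReal)⁻¹) (i m : ℕ) (w : Fin m → A) :
    μ.real {ω | (fun s : Fin m => ξ (i + s) ω) = w} = (q : ℝ)⁻¹ ^ m := by
  have hg : Function.Injective fun s : Fin m => i + (s : ℕ) := fun s t hst =>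
    Fin.ext (Nat.add_left_cancel hst)
  simp only [Measure.real, funext_iff, measure_forall_eq_of_iIndepFun hg hindep hunif,
    Fintype.card_fin, ENNReal.toReal_pow, ENNReal.toReal_inv, ENNReal.toReal_natCast]

theorem measurableSet_window (hmeas : ∀ k, Measurable (ξ k)) (i m : ℕ) (w : Fin m → A) :
    MeasurableSet {ω | (fun s : Fin m => ξ (i + s) ω) = w} :=
  (measurable_pi_lambda _ fun _ => hmeas _) (measurableSet_singleton w)

open Classical in
theorem integral_window_indicator_mul (hmeas : ∀ k, Measurable (ξ k)) (hindep : iIndepFun ξ μ)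
    (hunif : ∀ k a, μ {ω | ξ k ω = a} = (q : ENNReal)⁻¹) {ℓ : ℕ} (U V : Fin ℓ → A) (i : ℕ)
    {j : ℕ} (hj : j ≤ ℓ) :
    ∫ ω, (if (fun s : Fin ℓ => ξ (i + s) ω) = U then (1 : ℝ) else 0) *
        (if (fun s : Fin ℓ => ξ (i + j + s) ω) = V then (1 : ℝ) else 0) ∂μ =
      if OverlapAt ℓ (ℓ - j) U V then (q : ℝ)⁻¹ ^ (j + ℓ) else 0 := by
  set S := {ω | (fun s : Fin ℓ => ξ (i + s) ω) = U ∧ (fun s : Fin ℓ => ξ (i + j + s) ω) = V}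
  have hS : S = {ω | OverlapAt ℓ (ℓ - j) U V ∧ (fun s : Fin (j + ℓ) => ξ (i + s) ω) =
      Fin.append (fun s : Fin j => U (Fin.castLE hj s)) V} :=
    Set.ext fun ω => window_eq_and_window_eq_iff (fun n => ξ n ω) i hj U V
  have hSmeas : MeasurableSet S :=
    (measurableSet_window hmeas i ℓ U).inter (measurableSet_window hmeas (i + j) ℓ V)
  calc _ = ∫ ω, S.indicator 1 ω ∂μ := by
        congr with ω
        simp only [ite_zero_mul_ite_zero, one_mul, Set.indicator_apply, Pi.one_apply]
        rfl
    _ = μ.real S := integral_indicator_one hSmeas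
    _ = _ := by
        split_ifs with hov
        · simp only [hS, hov, true_and, measureReal_window_eq hindep hunif]
        · simp [hS, hov]

end Probability

theorem zpow_neg_mul_zpow_natCast_sub_sub {α : Type*} [DivisionMonoid α] {q : α} {ℓ j : ℕ} (hj : j ≤ ℓ) :
    q ^ (-(ℓ : ℤ)) * q ^ (((ℓ - j : ℕ) : ℤ) - ℓ) = q⁻¹ ^ (j + ℓ) := by
  rw [Nat.cast_sub hj, sub_sub_cancel_left, zpow_neg, zpow_neg, zpow_natCast, zpow_natCast,
    ← inv_pow, ← inv_pow, ← pow_add, add_comm]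

open Classical in
theorem sum_ite_overlapAt_sub {A : Type*} (q ℓ : ℕ) (U V : Fin ℓ → A) :
    ∑ j ∈ Finset.Ico 1 ℓ, (if OverlapAt ℓ (ℓ - j) U V then (q : ℝ)⁻¹ ^ (j + ℓ) else 0) =
      (q : ℝ) ^ (-(ℓ : ℤ)) * theta q ℓ U V := by
  have hreflect := Finset.sum_Ico_reflect
    (fun k => (q : ℝ) ^ (-(ℓ : ℤ)) * if OverlapAt ℓ k U V then (q : ℝ) ^ ((k : ℤ) - ℓ) else 0)
    1 (Nat.le_succ ℓ)
  rw [Nat.add_sub_cancel_left, Nat.add_sub_cancel] at hreflect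
  rw [theta, Finset.mul_sum, ← hreflect]
  refine Finset.sum_congr rfl fun j hj => ?_
  rw [mul_ite, mul_zero, zpow_neg_mul_zpow_natCast_sub_sub (Finset.mem_Ico.1 hj).2.le]

open Classical in
theorem statement2_general {A : Type*} [MeasurableSpace A] [MeasurableSingletonClass A]
    {Ω : Type*} [MeasurableSpace Ω] (μ : Measure Ω)
    (q ℓ : ℕ)
    (ξ : ℕ → Ω → A) (hmeas : ∀ k, Measurable (ξ k))
    (hindep : iIndepFun ξ μ)
    (hunif : ∀ k a, μ {ω | ξ k ω = a} = (q : ENNReal)⁻¹)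
    (U V : Fin ℓ → A) (i : ℕ) :
    ∑ j ∈ Finset.Ico 1 ℓ,
        ∫ ω, (if (fun s : Fin ℓ => ξ (i + s) ω) = U then (1 : ℝ) else 0) *
          (if (fun s : Fin ℓ => ξ (i + j + s) ω) = V then (1 : ℝ) else 0) ∂μ =
      (q : ℝ) ^ (-(ℓ : ℤ)) * theta q ℓ U V := by
  rw [← sum_ite_overlapAt_sub]
  exact Finset.sum_congr rfl fun j hj =>
    integral_window_indicator_mul hmeas hindep hunif U V i (Finset.mem_Ico.1 hj).2.le

open Classical in
/-- `∑_{j=1}^{ℓ-1} E[1{W_i = U}·1{W_{i+j} = V}] = q^{-ℓ} θ_{UV}`. -/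
theorem statement2 {A : Type*} [Fintype A] [MeasurableSpace A] [MeasurableSingletonClass A]
    {Ω : Type*} [MeasurableSpace Ω] (μ : Measure Ω) [IsProbabilityMeasure μ]
    (q ℓ : ℕ) (hq : Fintype.card A = q)
    (ξ : ℕ → Ω → A) (hmeas : ∀ k, Measurable (ξ k))
    (hindep : iIndepFun ξ μ)
    (hunif : ∀ k a, μ {ω | ξ k ω = a} = (q : ENNReal)⁻¹)
    (U V : Fin ℓ → A) (i : ℕ) :
    ∑ j ∈ Finset.Ico 1 ℓ,
        ∫ ω, (if (fun s : Fin ℓ => ξ (i + s) ω) = U then (1 : ℝ) else 0) *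
          (if (fun s : Fin ℓ => ξ (i + j + s) ω) = V then (1 : ℝ) else 0) ∂μ =
      (q : ℝ) ^ (-(ℓ : ℤ)) * theta q ℓ U V :=
  statement2_general μ q ℓ ξ hmeas hindep hunif U V i
end

section
/- Let P be an irreducible stochastic matrix with stationary distribution π. Then the group inverse Q := (I−P)^# satisfies Q(I−P) = (I−P)Q = I − 𝟙π^T, where 𝟙 is the all-ones column vector. -/
open Matrix Finset Module

private lemma stoch_pow {W : Type*} [Fintype W] [DecidableEq W] (P : Matrix W W ℝ)
    (hnn : ∀ i j, 0 ≤ P i j) (hrow : ∀ i, ∑ j, P i j = 1) (n : ℕ) :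
    (∀ i j, 0 ≤ (P ^ n) i j) ∧ (∀ i, ∑ j, (P ^ n) i j = 1) := by
  induction n with
  | zero =>
    constructor
    · intro i j; simp [Matrix.one_apply]; positivity
    · intro i; simp [Matrix.one_apply]
  | succ n ih =>
    constructor
    · intro i j
      rw [pow_succ, Matrix.mul_apply]
      exact Finset.sum_nonneg fun k _ => mul_nonneg (ih.1 i k) (hnn k j)
    · intro i
      simp only [pow_succ, Matrix.mul_apply]
      rw [Finset.sum_comm]
      calc ∑ k, ∑ j, (P ^ n) i k * P k j = ∑ k, (P ^ n) i k * ∑ j, P k j := by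
            simp [Finset.mul_sum]
        _ = 1 := by simp [hrow, ih.2 i]

/-- A fixed vector of an irreducible stochastic matrix is constant. -/
private lemma fixed_const {W : Type*} [Fintype W] [DecidableEq W] (P : Matrix W W ℝ)
    (hnn : ∀ i j, 0 ≤ P i j) (hrow : ∀ i, ∑ j, P i j = 1)
    (hirr : ∀ i j, ∃ n : ℕ, 1 ≤ n ∧ 0 < (P ^ n) i j)
    (x : W → ℝ) (hx : P *ᵥ x = x) (i j : W) : x i = x j := by
  have hne : Nonempty W := ⟨i⟩
  obtain ⟨i₀, hi₀⟩ := Finite.exists_max x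
  have hpow : ∀ n : ℕ, (P ^ n) *ᵥ x = x := by
    intro n
    induction n with
    | zero => simp
    | succ n ih =>
      rw [pow_succ', ← Matrix.mulVec_mulVec, ih, hx]
  have key : ∀ j, x j = x i₀ := by
    intro j
    obtain ⟨n, -, hpos⟩ := hirr i₀ j
    obtain ⟨hn, hr⟩ := stoch_pow P hnn hrow n
    have hsum : ∑ k, (P ^ n) i₀ k * (x i₀ - x k) = 0 := by
      have h1 : ∑ k, (P ^ n) i₀ k * x k = x i₀ := by
        have := congrFun (hpow n) i₀
        simpa [Matrix.mulVec, dotProduct] using this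
      simp only [mul_sub, Finset.sum_sub_distrib, ← Finset.sum_mul, hr i₀, one_mul, h1,
        sub_self]
    have hz := (Finset.sum_eq_zero_iff_of_nonneg
      (fun k _ => mul_nonneg (hn i₀ k) (sub_nonneg.mpr (hi₀ k)))).mp hsum j (Finset.mem_univ j)
    have := (mul_eq_zero.mp hz).resolve_left (ne_of_gt hpos)
    linarith
  rw [key i, key j]

/-- If `P` is an irreducible stochastic matrix with stationary distribution `π` and `Q` is the
group inverse of `I - P`, then `Q(I-P) = (I-P)Q = I - 𝟙πᵀ`. -/
theorem statement6 {W : Type*} [Fintype W] [DecidableEq W] (P : Matrix W W ℝ)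
    (hnn : ∀ i j, 0 ≤ P i j) (hrow : ∀ i, ∑ j, P i j = 1)
    (hirr : ∀ i j, ∃ n : ℕ, 1 ≤ n ∧ 0 < (P ^ n) i j)
    (π : W → ℝ) (hπnn : ∀ i, 0 ≤ π i) (hπ1 : ∑ i, π i = 1)
    (hstat : ∀ j, ∑ i, π i * P i j = π j)
    (Q : Matrix W W ℝ)
    (h1 : (1 - P) * Q = Q * (1 - P))
    (h2 : (1 - P) * Q * (1 - P) = 1 - P)
    (h3 : Q * (1 - P) * Q = Q) :
    Q * (1 - P) = 1 - Matrix.of (fun _ j => π j) ∧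
    (1 - P) * Q = 1 - Matrix.of (fun _ j => π j) := by
  have hne : Nonempty W := by
    by_contra h
    rw [not_nonempty_iff] at h
    simp [Finset.univ_eq_empty] at hπ1
  set A : Matrix W W ℝ := 1 - P with hA
  -- basic kernel facts
  have hones : A *ᵥ (fun _ => (1:ℝ)) = 0 := by
    funext i
    simp [hA, Matrix.sub_mulVec, Matrix.mulVec, dotProduct, hrow i, Matrix.one_apply]
  have hones_ne : (fun _ => (1:ℝ)) ≠ (0 : W → ℝ) := by
    intro h
    have := congrFun h (Classical.arbitrary W)
    norm_num at this
  have hπA : π ᵥ* A = 0 := by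
    funext j
    have e1 : ∑ x, π x * (1 : Matrix W W ℝ) x j = π j := by
      simp [Matrix.one_apply]
    simp [hA, Matrix.sub_vecMul, Matrix.vecMul, dotProduct, mul_sub,
      Finset.sum_sub_distrib, hstat j, e1]
  have hπ_ne : π ≠ 0 := by
    intro h
    rw [h] at hπ1
    simp at hπ1
  -- kernel of A is the span of the all-ones vector
  have hker : LinearMap.ker A.mulVecLin = Submodule.span ℝ {(fun _ => (1:ℝ))} := by
    apply le_antisymm
    · intro x hx
      have hx' : P *ᵥ x = x := by
        have : A *ᵥ x = 0 := hx
        rw [hA, Matrix.sub_mulVec, Matrix.one_mulVec, sub_eq_zero] at this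
        exact this.symm
      have hconst := fixed_const P hnn hrow hirr x hx'
      have : x = (x (Classical.arbitrary W)) • (fun _ => (1:ℝ)) := by
        funext k
        simp [hconst k (Classical.arbitrary W)]
      rw [this]
      exact Submodule.smul_mem _ _ (Submodule.mem_span_singleton_self _)
    · rw [Submodule.span_singleton_le_iff_mem]
      exact hones
  have hcard : Module.finrank ℝ (W → ℝ) = Fintype.card W :=
    Module.finrank_fintype_fun_eq_card ℝ
  have hkerdim : Module.finrank ℝ (LinearMap.ker A.mulVecLin) = 1 := by
    rw [hker]; exact finrank_span_singleton hones_ne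
  -- transpose kernel has dimension 1
  have hrankT : Aᵀ.rank = A.rank := Matrix.rank_transpose A
  have hkerT : Module.finrank ℝ (LinearMap.ker Aᵀ.mulVecLin) = 1 := by
    have e1 := LinearMap.finrank_range_add_finrank_ker A.mulVecLin
    have e2 := LinearMap.finrank_range_add_finrank_ker Aᵀ.mulVecLin
    rw [hcard, hkerdim] at e1
    rw [hcard] at e2
    have hr1 : A.rank = Module.finrank ℝ (LinearMap.range A.mulVecLin) := rfl
    have hr2 : Aᵀ.rank = Module.finrank ℝ (LinearMap.range Aᵀ.mulVecLin) := rfl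
    omega
  have hkerT_span : LinearMap.ker Aᵀ.mulVecLin = Submodule.span ℝ {π} := by
    have hπmem : π ∈ LinearMap.ker Aᵀ.mulVecLin := by
      simp only [LinearMap.mem_ker, Matrix.mulVecLin_apply]
      rw [Matrix.mulVec_transpose, hπA]
    refine (Submodule.eq_of_le_of_finrank_le ?_ ?_).symm
    · rw [Submodule.span_singleton_le_iff_mem]; exact hπmem
    · rw [hkerT, finrank_span_singleton hπ_ne]
  -- the projection S = 1 - Q*A
  have hAZ : A * (Q * A) = A := by rw [← Matrix.mul_assoc]; exact h2
  have hZA : (Q * A) * A = A := by rw [← h1]; exact h2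
  have hZZ : (Q * A) * (Q * A) = Q * A := by rw [← Matrix.mul_assoc, h3]
  set Z : Matrix W W ℝ := Q * A with hZ
  set S : Matrix W W ℝ := 1 - Z with hS
  have hAS : A * S = 0 := by rw [hS, Matrix.mul_sub, Matrix.mul_one, hAZ, sub_self]
  have hSA : S * A = 0 := by rw [hS, Matrix.sub_mul, Matrix.one_mul, hZA, sub_self]
  have hSS : S * S = S := by
    rw [hS, Matrix.sub_mul, Matrix.mul_sub, Matrix.mul_sub, Matrix.one_mul, Matrix.mul_one,
      Matrix.one_mul, hZZ]
    abel
  -- each column of S is constant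
  set i₀ : W := Classical.arbitrary W with hi₀
  set v : W → ℝ := fun j => S i₀ j with hv
  have hcol : ∀ i j, S i j = v j := by
    intro i j
    have hmem : (fun k => S k j) ∈ LinearMap.ker A.mulVecLin := by
      simp only [LinearMap.mem_ker, Matrix.mulVecLin_apply]
      funext i'
      have := congrFun (congrFun hAS i') j
      simpa [Matrix.mulVec, dotProduct, Matrix.mul_apply] using this
    rw [hker, Submodule.mem_span_singleton] at hmem
    obtain ⟨c, hc⟩ := hmem
    have h1' := congrFun hc i
    have h2' := congrFun hc i₀
    simp only [Pi.smul_apply, smul_eq_mul, mul_one] at h1' h2'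
    rw [hv]
    simp only [← h1', ← h2']
  -- v is in the left kernel of A, hence a multiple of π
  have hvA : v ᵥ* A = 0 := by
    funext j
    have := congrFun (congrFun hSA i₀) j
    simpa [Matrix.vecMul, dotProduct, Matrix.mul_apply, hv] using this
  have hvmem : v ∈ LinearMap.ker Aᵀ.mulVecLin := by
    simp only [LinearMap.mem_ker, Matrix.mulVecLin_apply]
    rw [Matrix.mulVec_transpose, hvA]
  rw [hkerT_span, Submodule.mem_span_singleton] at hvmem
  obtain ⟨c, hc⟩ := hvmem
  -- idempotency forces c = 0 or 1
  have hvsum : ∑ k, v k = c := by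
    have e : ∀ k, v k = c * π k := fun k => by rw [← hc]; simp
    simp only [e, ← Finset.mul_sum, hπ1, mul_one]
  have hidem : ∀ j, (∑ k, v k) * v j = v j := by
    intro j
    have := congrFun (congrFun hSS i₀) j
    rw [Matrix.mul_apply] at this
    calc (∑ k, v k) * v j = ∑ k, v k * v j := by rw [Finset.sum_mul]
      _ = ∑ k, S i₀ k * S k j := by
          apply Finset.sum_congr rfl
          intro k _
          rw [hcol i₀ k, hcol k j]
      _ = S i₀ j := this
      _ = v j := rfl
  -- c ≠ 0 since otherwise Q*A = 1 contradicting singularity of A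
  have hc_ne : c ≠ 0 := by
    intro h0
    have hv0 : v = 0 := by rw [← hc, h0, zero_smul]
    have hS0 : S = 0 := by
      funext i j
      rw [hcol i j, hv0]
      rfl
    have hZ1 : Z = 1 := by
      have : (1 : Matrix W W ℝ) - Z = 0 := hS0
      linear_combination (norm := abel) -this
    have := congrFun ((congrArg (· *ᵥ (fun _ => (1:ℝ)))) hZ1) i₀
    rw [hZ, ← Matrix.mulVec_mulVec, hones] at this
    simp [Matrix.mulVec, dotProduct, Matrix.one_apply] at this
  -- conclude c = 1
  have hc1 : c = 1 := by
    obtain ⟨j, hj⟩ : ∃ j, π j ≠ 0 := by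
      by_contra h
      push_neg at h
      rw [Finset.sum_congr rfl (fun j _ => h j)] at hπ1
      simp at hπ1
    have := hidem j
    rw [hvsum, ← hc] at this
    simp only [Pi.smul_apply, smul_eq_mul] at this
    have : (c - 1) * (c * π j) = 0 := by ring_nf; linarith
    rcases mul_eq_zero.mp this with h | h
    · linarith
    · exact absurd (mul_eq_zero.mp h) (by simp [hc_ne, hj])
  have hveq : v = π := by rw [← hc, hc1, one_smul]
  have hSE : S = Matrix.of (fun _ j => π j) := by
    funext i j
    rw [hcol i j, hveq]
    rfl
  have hQA : Q * (1 - P) = 1 - Matrix.of (fun _ j => π j) := by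
    rw [← hSE]
    have e : Z = 1 - S := by rw [hS]; abel
    calc Q * (1 - P) = Z := rfl
      _ = 1 - S := e
  refine ⟨hQA, ?_⟩
  calc (1 - P) * Q = Q * (1 - P) := h1
    _ = 1 - Matrix.of (fun _ j => π j) := hQA
end

section
/- Let P be an irreducible stochastic matrix with stationary distribution π. Then (I − P)^# = (I − P + 𝟙π^T)^{-1} − 𝟙π^T. In particular I − P + 𝟙π^T is invertible. -/
lemma aux_pow_nonneg {W : Type*} [Fintype W] [DecidableEq W]
    (P : Matrix W W ℝ) (hnn : ∀ i j, 0 ≤ P i j) :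
    ∀ n i j, 0 ≤ (P ^ n) i j := by
  intro n
  induction n with
  | zero =>
    intro i j
    simp [Matrix.one_apply]
    split <;> norm_num
  | succ n ih =>
    intro i j
    rw [pow_succ, Matrix.mul_apply]
    exact Finset.sum_nonneg fun k _ => mul_nonneg (ih i k) (hnn k j)

lemma aux_const {W : Type*} [Fintype W] [DecidableEq W]
    (P : Matrix W W ℝ) (hnn : ∀ i j, 0 ≤ P i j) (hrow : ∀ i, ∑ j, P i j = 1)
    (hirr : ∀ i j, ∃ n : ℕ, 1 ≤ n ∧ 0 < (P ^ n) i j)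
    (x : W → ℝ) (hx : ∀ i, ∑ k, P i k * x k = x i) (i j : W) : x i = x j := by
  haveI : Nonempty W := ⟨i⟩
  obtain ⟨i₀, hi₀⟩ := Finite.exists_max x
  have key : ∀ k, x k = x i₀ → ∀ l, 0 < P k l → x l = x i₀ := by
    intro k hk l hl
    have h1 : ∑ m, P k m * x i₀ = x i₀ := by rw [← Finset.sum_mul, hrow k, one_mul]
    have hsum : ∑ m, P k m * (x i₀ - x m) = 0 := by
      have : ∑ m, P k m * (x i₀ - x m) = (∑ m, P k m * x i₀) - ∑ m, P k m * x m := by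
        rw [← Finset.sum_sub_distrib]
        exact Finset.sum_congr rfl fun m _ => by ring
      rw [this, h1, hx k, hk]
      ring
    have hnn' : ∀ m ∈ Finset.univ, (0:ℝ) ≤ P k m * (x i₀ - x m) :=
      fun m _ => mul_nonneg (hnn k m) (by linarith [hi₀ m])
    have hz := (Finset.sum_eq_zero_iff_of_nonneg hnn').mp hsum l (Finset.mem_univ l)
    rcases mul_eq_zero.mp hz with h | h
    · exact absurd h (ne_of_gt hl)
    · linarith
  have pow : ∀ n k l, x k = x i₀ → 0 < (P ^ n) k l → x l = x i₀ := by
    intro n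
    induction n with
    | zero =>
      intro k l hk hl
      rw [pow_zero, Matrix.one_apply] at hl
      split_ifs at hl with h
      · rw [← h]; exact hk
      · norm_num at hl
    | succ n ih =>
      intro k l hk hl
      rw [pow_succ, Matrix.mul_apply] at hl
      obtain ⟨m, -, hm⟩ : ∃ m ∈ Finset.univ, 0 < (P ^ n) k m * P m l := by
        by_contra h
        push_neg at h
        have : ∑ m, (P ^ n) k m * P m l ≤ 0 := Finset.sum_nonpos fun m hm => h m hm
        linarith
      rcases mul_pos_iff.mp hm with ⟨ha, hb⟩ | ⟨ha, hb⟩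
      · exact key m (ih k m hk ha) l hb
      · linarith [aux_pow_nonneg P hnn n k m]
  obtain ⟨n, -, hni⟩ := hirr i₀ i
  obtain ⟨m, -, hmj⟩ := hirr i₀ j
  rw [pow n i₀ i rfl hni, pow m i₀ j rfl hmj]


/-- If `P` is an irreducible stochastic matrix with stationary distribution `π`, then
`I - P + 𝟙πᵀ` is invertible and the group inverse of `I - P` equals
`(I - P + 𝟙πᵀ)⁻¹ - 𝟙πᵀ`. -/
theorem statement7 {W : Type*} [Fintype W] [DecidableEq W] (P : Matrix W W ℝ)
    (hnn : ∀ i j, 0 ≤ P i j) (hrow : ∀ i, ∑ j, P i j = 1)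
    (hirr : ∀ i j, ∃ n : ℕ, 1 ≤ n ∧ 0 < (P ^ n) i j)
    (π : W → ℝ) (hπnn : ∀ i, 0 ≤ π i) (hπ1 : ∑ i, π i = 1)
    (hstat : ∀ j, ∑ i, π i * P i j = π j)
    (Q : Matrix W W ℝ)
    (h1 : (1 - P) * Q = Q * (1 - P))
    (h2 : (1 - P) * Q * (1 - P) = 1 - P)
    (h3 : Q * (1 - P) * Q = Q) :
    IsUnit (1 - P + Matrix.of (fun _ j => π j)) ∧
    Q = (1 - P + Matrix.of (fun _ j => π j))⁻¹ - Matrix.of (fun _ j => π j) := by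
  set Pi : Matrix W W ℝ := Matrix.of (fun _ j => π j) with hPi
  have hPi_app : ∀ i j, Pi i j = π j := fun i j => rfl
  -- Pi * Pi = Pi
  have hPiPi : Pi * Pi = Pi := by
    ext i j
    rw [Matrix.mul_apply]
    simp only [hPi_app]
    rw [← Finset.sum_mul, hπ1, one_mul]
  -- (1 - P) * Pi = 0
  have hIPPi : (1 - P) * Pi = 0 := by
    ext i j
    rw [Matrix.mul_apply]
    simp only [hPi_app, Matrix.sub_apply]
    rw [← Finset.sum_mul]
    have : ∑ k, ((1 : Matrix W W ℝ) i k - P i k) = 0 := by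
      rw [Finset.sum_sub_distrib, hrow i]
      simp [Matrix.one_apply]
    rw [this, zero_mul, Matrix.zero_apply]
  -- Pi * (1 - P) = 0
  have hPiIP : Pi * (1 - P) = 0 := by
    ext i j
    rw [Matrix.mul_apply]
    simp only [hPi_app, Matrix.sub_apply, Matrix.zero_apply]
    have : ∑ k, π k * ((1 : Matrix W W ℝ) k j - P k j)
        = (∑ k, π k * (1 : Matrix W W ℝ) k j) - ∑ k, π k * P k j := by
      rw [← Finset.sum_sub_distrib]
      exact Finset.sum_congr rfl fun k _ => by ring
    rw [this, hstat j]
    have : ∑ k, π k * (1 : Matrix W W ℝ) k j = π j := by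
      simp [Matrix.one_apply]
    rw [this, sub_self]
  -- M := 1 - Q * (1 - P)
  set M : Matrix W W ℝ := 1 - Q * (1 - P) with hM
  have hM2 : M = 1 - (1 - P) * Q := by rw [hM, h1]
  have hIPM : (1 - P) * M = 0 := by
    rw [hM, mul_sub, mul_one, ← mul_assoc, h2, sub_self]
  -- columns of M are constant
  have hMconst : ∀ i i' j, M i j = M i' j := by
    intro i i' j
    have hx : ∀ k, ∑ m, P k m * M m j = M k j := by
      intro k
      have := congrFun (congrFun hIPM k) j
      rw [Matrix.mul_apply, Matrix.zero_apply] at this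
      have hsplit : ∑ m, ((1:Matrix W W ℝ) k m - P k m) * M m j
          = (∑ m, (1:Matrix W W ℝ) k m * M m j) - ∑ m, P k m * M m j := by
        rw [← Finset.sum_sub_distrib]
        exact Finset.sum_congr rfl fun m _ => by ring
      simp only [Matrix.sub_apply] at this
      rw [hsplit] at this
      have h1m : ∑ m, (1:Matrix W W ℝ) k m * M m j = M k j := by
        simp [Matrix.one_apply]
      rw [h1m] at this
      linarith
    exact aux_const P hnn hrow hirr (fun k => M k j) hx i i'
  -- Pi * M = Pi
  have hPiM : Pi * M = Pi := by
    rw [hM2, mul_sub, mul_one, ← mul_assoc, hPiIP, zero_mul, sub_zero]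
  -- M = Pi
  have hMPi : M = Pi := by
    ext i j
    have := congrFun (congrFun hPiM i) j
    rw [Matrix.mul_apply] at this
    simp only [hPi_app] at this
    have hc : ∑ k, π k * M k j = ∑ k, π k * M i j :=
      Finset.sum_congr rfl fun k _ => by rw [hMconst k i j]
    rw [hc, ← Finset.sum_mul, hπ1, one_mul] at this
    rw [this, hPi_app]
  have hQIP : Q * (1 - P) = 1 - Pi := by
    have := hMPi
    rw [hM] at this
    linear_combination (norm := abel) -this
  have hIPQ : (1 - P) * Q = 1 - Pi := by rw [h1, hQIP]
  -- Pi * Q = 0, Q * Pi = 0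
  have e1 : Pi = 1 - Q * (1 - P) := hMPi.symm.trans hM
  have e2 : Pi = 1 - (1 - P) * Q := hMPi.symm.trans hM2
  have hPiQ : Pi * Q = 0 := by
    rw [e1, sub_mul, one_mul, mul_assoc, ← mul_assoc, h3, sub_self]
  have hQPi : Q * Pi = 0 := by
    rw [e2, mul_sub, mul_one, ← mul_assoc, h3, sub_self]
  -- inverse computation
  have hAB : (1 - P + Pi) * (Q + Pi) = 1 := by
    rw [add_mul, mul_add, mul_add, hIPQ, hIPPi, hPiQ, hPiPi]
    abel
  have hBA : (Q + Pi) * (1 - P + Pi) = 1 := by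
    rw [mul_add, add_mul, add_mul, hQIP, hQPi, hPiIP, hPiPi]
    abel
  haveI := invertibleOfRightInverse _ _ hAB
  refine ⟨isUnit_of_invertible _, ?_⟩
  rw [Matrix.inv_eq_right_inv hAB]
  abel
end

section
/- For the de Bruijn transition matrix P_ℓ on A^ℓ (q-letter alphabet), the group inverse of I − P_ℓ has entries ((I−P_ℓ)^#)_{U,V} = 1{U=V} + θ_{UV} − ℓ·q^{-ℓ}, where θ_{UV} := ∑_{k ∈ Θ(U,V)} q^{k-ℓ} and Θ(U,V) is the set of overlap lengths k ∈ [1, ℓ-1] of the suffix of U with the prefix of V. -/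
/-- `tail_j(U) = head_j(V)`: for all `i` with `i + j < ℓ`, `U_{i+j} = V_i`. -/
def ShiftEq {A : Type*} (ℓ j : ℕ) (U V : Fin ℓ → A) : Prop :=
  ∀ (i : ℕ) (h : i + j < ℓ), U ⟨i + j, h⟩ = V ⟨i, by omega⟩

open Classical in
/-- The de Bruijn transition matrix on the `q^ℓ` strings of length `ℓ`. -/
noncomputable def deBruijn (q ℓ : ℕ) : Matrix (Fin ℓ → Fin q) (Fin ℓ → Fin q) ℝ :=
  Matrix.of fun U V => if ShiftEq ℓ 1 U V then (q : ℝ)⁻¹ else 0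

open Classical in
/-- The overlap index `θ_{UV} = ∑_{k ∈ Θ(U,V)} q^{k-ℓ}`; the length-`k` suffix of `U`
equals the length-`k` prefix of `V` iff `ShiftEq ℓ (ℓ-k) U V`. -/
noncomputable def thetaD (q ℓ : ℕ) (U V : Fin ℓ → Fin q) : ℝ :=
  ∑ k ∈ Finset.Ico 1 ℓ, if ShiftEq ℓ (ℓ - k) U V then (q : ℝ) ^ ((k : ℤ) - ℓ) else 0

lemma shiftEq_iff {A : Type*} {ℓ j : ℕ} {U V : Fin ℓ → A} :
    ShiftEq ℓ j U V ↔ ∀ (a b : Fin ℓ), (a : ℕ) = (b : ℕ) + j → U a = V b := by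
  constructor
  · intro h a b hab
    have hb : (b : ℕ) + j < ℓ := by omega
    have := h b hb
    have ha : a = ⟨(b : ℕ) + j, hb⟩ := Fin.ext hab
    have hb' : b = ⟨(b : ℕ), by omega⟩ := Fin.ext rfl
    rw [ha]
    convert this using 2
  · intro h i hi
    exact h _ _ (by simp)

lemma shiftEq_top {A : Type*} {ℓ j : ℕ} (hj : ℓ ≤ j) (U V : Fin ℓ → A) : ShiftEq ℓ j U V := by
  intro i hi; omega

open Classical

lemma card_shift_right {q ℓ j : ℕ} (hj : j ≤ ℓ) (V : Fin ℓ → Fin q) :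
    (Finset.univ.filter fun W : Fin ℓ → Fin q => ShiftEq ℓ j W V).card = q ^ j := by
  classical
  set f : (Fin j → Fin q) → (Fin ℓ → Fin q) := fun a i =>
    if h : (i : ℕ) < j then a ⟨i, h⟩ else V ⟨(i : ℕ) - j, by omega⟩ with hf
  have hinj : Function.Injective f := by
    intro a b hab
    funext t
    have := congrFun hab ⟨(t : ℕ), by omega⟩
    simpa [hf, t.isLt] using this
  have himg : (Finset.univ.filter fun W : Fin ℓ → Fin q => ShiftEq ℓ j W V)
      = Finset.image f Finset.univ := by
    ext W
    simp only [Finset.mem_filter, Finset.mem_univ, true_and, Finset.mem_image]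
    constructor
    · intro hW
      refine ⟨fun t => W ⟨(t : ℕ), by omega⟩, ?_⟩
      funext i
      simp only [hf]
      split_ifs with h
      · exact congrArg W (Fin.ext rfl)
      · exact (shiftEq_iff.mp hW i ⟨(i : ℕ) - j, by omega⟩ (by simp; omega)).symm
    · rintro ⟨a, rfl⟩
      rw [shiftEq_iff]
      intro x y hxy
      simp only [hf]
      rw [dif_neg (by omega)]
      exact congrArg V (Fin.ext (by simp; omega))
  rw [himg, Finset.card_image_of_injective _ hinj]
  simp

lemma card_shift_left {q ℓ j : ℕ} (hj : j ≤ ℓ) (U : Fin ℓ → Fin q) :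
    (Finset.univ.filter fun W : Fin ℓ → Fin q => ShiftEq ℓ j U W).card = q ^ j := by
  classical
  set f : (Fin j → Fin q) → (Fin ℓ → Fin q) := fun a i =>
    if h : (i : ℕ) + j < ℓ then U ⟨(i : ℕ) + j, h⟩ else a ⟨(i : ℕ) - (ℓ - j), by omega⟩ with hf
  have hinj : Function.Injective f := by
    intro a b hab
    funext t
    have := congrFun hab ⟨ℓ - j + (t : ℕ), by omega⟩
    have h1 : ¬ (ℓ - j + (t : ℕ) + j < ℓ) := by omega
    simp only [hf, dif_neg h1] at this
    have h2 : (ℓ - j + (t : ℕ)) - (ℓ - j) = (t : ℕ) := by omega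
    simpa [h2] using this
  have himg : (Finset.univ.filter fun W : Fin ℓ → Fin q => ShiftEq ℓ j U W)
      = Finset.image f Finset.univ := by
    ext W
    simp only [Finset.mem_filter, Finset.mem_univ, true_and, Finset.mem_image]
    constructor
    · intro hW
      refine ⟨fun t => W ⟨ℓ - j + (t : ℕ), by omega⟩, ?_⟩
      funext i
      simp only [hf]
      split_ifs with h
      · exact shiftEq_iff.mp hW ⟨(i : ℕ) + j, h⟩ i (by simp)
      · exact congrArg W (Fin.ext (by simp; omega))
    · rintro ⟨a, rfl⟩
      rw [shiftEq_iff]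
      intro x y hxy
      simp only [hf]
      rw [dif_pos (by omega)]
      exact congrArg U (Fin.ext (by simp; omega))
  rw [himg, Finset.card_image_of_injective _ hinj]
  simp

def midW {q ℓ k : ℕ} (hk : k < ℓ) (U V : Fin ℓ → Fin q) : Fin ℓ → Fin q := fun i =>
  if h : (i : ℕ) + 1 < ℓ then U ⟨(i : ℕ) + 1, h⟩ else V ⟨k - 1, by omega⟩

lemma mid_iff {q ℓ k : ℕ} (hk1 : 1 ≤ k) (hk : k < ℓ) (U V W : Fin ℓ → Fin q) :
    (ShiftEq ℓ 1 U W ∧ ShiftEq ℓ (ℓ - k) W V) ↔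
      (ShiftEq ℓ (ℓ - k + 1) U V ∧ W = midW hk U V) := by
  constructor
  · rintro ⟨h1, h2⟩
    constructor
    · rw [shiftEq_iff]
      intro a b hab
      have e1 : U a = W ⟨(b : ℕ) + (ℓ - k), by omega⟩ :=
        shiftEq_iff.mp h1 a ⟨(b : ℕ) + (ℓ - k), by omega⟩ (by simp; omega)
      have e2 : W ⟨(b : ℕ) + (ℓ - k), by omega⟩ = V b :=
        shiftEq_iff.mp h2 ⟨(b : ℕ) + (ℓ - k), by omega⟩ b (by simp)
      rw [e1, e2]
    · funext i
      simp only [midW]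
      split_ifs with h
      · exact (shiftEq_iff.mp h1 ⟨(i : ℕ) + 1, h⟩ i (by simp)).symm
      · exact shiftEq_iff.mp h2 i ⟨k - 1, by omega⟩ (by simp; omega)
  · rintro ⟨hR, rfl⟩
    constructor
    · rw [shiftEq_iff]
      intro a b hab
      simp only [midW]
      rw [dif_pos (by omega)]
      exact (congrArg U (Fin.ext (by simp; omega))).symm
    · rw [shiftEq_iff]
      intro a b hab
      simp only [midW]
      split_ifs with h
      · exact shiftEq_iff.mp hR ⟨(a : ℕ) + 1, h⟩ b (by simp; omega)
      · exact congrArg V (Fin.ext (by simp; omega))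

def midW' {q ℓ k : ℕ} (hk1 : 1 ≤ k) (hk : k < ℓ) (U V : Fin ℓ → Fin q) : Fin ℓ → Fin q := fun i =>
  if h : 1 ≤ (i : ℕ) then V ⟨(i : ℕ) - 1, by omega⟩ else U ⟨ℓ - k, by omega⟩

lemma mid_iff' {q ℓ k : ℕ} (hk1 : 1 ≤ k) (hk : k < ℓ) (U V W : Fin ℓ → Fin q) :
    (ShiftEq ℓ (ℓ - k) U W ∧ ShiftEq ℓ 1 W V) ↔
      (ShiftEq ℓ (ℓ - k + 1) U V ∧ W = midW' hk1 hk U V) := by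
  constructor
  · rintro ⟨h1, h2⟩
    constructor
    · rw [shiftEq_iff]
      intro a b hab
      have e1 : U a = W ⟨(b : ℕ) + 1, by omega⟩ :=
        shiftEq_iff.mp h1 a ⟨(b : ℕ) + 1, by omega⟩ (by simp; omega)
      have e2 : W ⟨(b : ℕ) + 1, by omega⟩ = V b :=
        shiftEq_iff.mp h2 ⟨(b : ℕ) + 1, by omega⟩ b (by simp)
      rw [e1, e2]
    · funext i
      simp only [midW']
      split_ifs with h
      · exact shiftEq_iff.mp h2 i ⟨(i : ℕ) - 1, by omega⟩ (by simp; omega)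
      · exact (shiftEq_iff.mp h1 ⟨ℓ - k, by omega⟩ i (by simp; omega)).symm
  · rintro ⟨hR, rfl⟩
    constructor
    · rw [shiftEq_iff]
      intro a b hab
      simp only [midW']
      split_ifs with h
      · exact shiftEq_iff.mp hR a ⟨(b : ℕ) - 1, by omega⟩ (by simp; omega)
      · exact (congrArg U (Fin.ext (by simp; omega))).symm
    · rw [shiftEq_iff]
      intro a b hab
      simp only [midW']
      rw [dif_pos (by omega)]
      exact congrArg V (Fin.ext (by simp; omega))

noncomputable def Gfun (q ℓ : ℕ) (U V : Fin ℓ → Fin q) (m : ℕ) : ℝ :=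
  if ShiftEq ℓ m U V then (q : ℝ) ^ (-(m : ℤ)) else 0

lemma theta_eq (q ℓ : ℕ) (U V : Fin ℓ → Fin q) :
    thetaD q ℓ U V = ∑ m ∈ Finset.Ico 1 ℓ, Gfun q ℓ U V m := by
  unfold thetaD
  refine Finset.sum_nbij' (fun k => ℓ - k) (fun m => ℓ - m) ?_ ?_ ?_ ?_ ?_
  · intro a ha; simp only [Finset.mem_Ico] at *; omega
  · intro a ha; simp only [Finset.mem_Ico] at *; omega
  · intro a ha; simp only [Finset.mem_Ico] at ha; show ℓ - (ℓ - a) = a; omega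
  · intro a ha; simp only [Finset.mem_Ico] at ha; show ℓ - (ℓ - a) = a; omega
  · intro a ha
    simp only [Finset.mem_Ico] at ha
    unfold Gfun
    have : ((a : ℤ)) - ℓ = -(((ℓ - a : ℕ) : ℤ)) := by omega
    rw [this]

lemma G_top (q ℓ : ℕ) (U V : Fin ℓ → Fin q) : Gfun q ℓ U V ℓ = (q : ℝ) ^ (-(ℓ : ℤ)) := by
  unfold Gfun
  rw [if_pos (shiftEq_top le_rfl U V)]

lemma G_one (q ℓ : ℕ) (U V : Fin ℓ → Fin q) : Gfun q ℓ U V 1 = deBruijn q ℓ U V := by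
  unfold Gfun deBruijn
  simp [zpow_neg_one]

lemma sum_row (q ℓ : ℕ) (hq : 1 ≤ q) (hℓ : 1 ≤ ℓ) (U : Fin ℓ → Fin q) :
    ∑ W : Fin ℓ → Fin q, deBruijn q ℓ U W = 1 := by
  unfold deBruijn
  simp only [Matrix.of_apply]
  rw [← Finset.sum_filter, Finset.sum_const, card_shift_left (j := 1) hℓ U, nsmul_eq_mul]
  have hq0 : (q : ℝ) ≠ 0 := Nat.cast_ne_zero.mpr (by omega)
  rw [pow_one]
  field_simp

lemma sum_col (q ℓ : ℕ) (hq : 1 ≤ q) (hℓ : 1 ≤ ℓ) (V : Fin ℓ → Fin q) :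
    ∑ W : Fin ℓ → Fin q, deBruijn q ℓ W V = 1 := by
  unfold deBruijn
  simp only [Matrix.of_apply]
  rw [← Finset.sum_filter, Finset.sum_const, card_shift_right (j := 1) hℓ V, nsmul_eq_mul]
  have hq0 : (q : ℝ) ≠ 0 := Nat.cast_ne_zero.mpr (by omega)
  rw [pow_one]
  field_simp

lemma sum_theta_col (q ℓ : ℕ) (hq : 1 ≤ q) (hℓ : 1 ≤ ℓ) (V : Fin ℓ → Fin q) :
    ∑ W : Fin ℓ → Fin q, thetaD q ℓ W V = (ℓ : ℝ) - 1 := by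
  unfold thetaD
  rw [Finset.sum_comm]
  have hq0 : (q : ℝ) ≠ 0 := Nat.cast_ne_zero.mpr (by omega)
  have : ∀ k ∈ Finset.Ico 1 ℓ,
      (∑ W : Fin ℓ → Fin q, if ShiftEq ℓ (ℓ - k) W V then (q : ℝ) ^ ((k : ℤ) - ℓ) else 0) = 1 := by
    intro k hk
    simp only [Finset.mem_Ico] at hk
    rw [← Finset.sum_filter, Finset.sum_const, card_shift_right (j := ℓ - k) (by omega) V,
      nsmul_eq_mul]
    rw [Nat.cast_pow, ← zpow_natCast (q : ℝ) (ℓ - k), ← zpow_add₀ hq0]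
    have : ((ℓ - k : ℕ) : ℤ) + ((k : ℤ) - ℓ) = 0 := by omega
    rw [this, zpow_zero]
  rw [Finset.sum_congr rfl this, Finset.sum_const, Nat.card_Ico, nsmul_eq_mul, mul_one]
  rw [Nat.cast_sub hℓ, Nat.cast_one]

lemma myIteMul {A B : Prop} (x y : ℝ) :
    ((if A then x else 0) * (if B then y else 0)) = if A ∧ B then x * y else 0 := by
  by_cases hA : A <;> by_cases hB : B <;> simp [hA, hB]

lemma sum_P_theta (q ℓ : ℕ) (hq : 1 ≤ q) (U V : Fin ℓ → Fin q) :
    ∑ W : Fin ℓ → Fin q, deBruijn q ℓ U W * thetaD q ℓ W V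
      = ∑ m ∈ Finset.Ico 2 (ℓ + 1), Gfun q ℓ U V m := by
  have hq0 : (q : ℝ) ≠ 0 := Nat.cast_ne_zero.mpr (by omega)
  unfold deBruijn thetaD
  simp only [Matrix.of_apply, Finset.mul_sum]
  rw [Finset.sum_comm]
  refine Finset.sum_nbij' (fun k => ℓ + 1 - k) (fun m => ℓ + 1 - m) ?_ ?_ ?_ ?_ ?_
  · intro a ha; simp only [Finset.mem_Ico] at *; omega
  · intro a ha; simp only [Finset.mem_Ico] at *; omega
  · intro a ha; simp only [Finset.mem_Ico] at ha; show ℓ + 1 - (ℓ + 1 - a) = a; omega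
  · intro a ha; simp only [Finset.mem_Ico] at ha; show ℓ + 1 - (ℓ + 1 - a) = a; omega
  · intro k hk
    simp only [Finset.mem_Ico] at hk
    obtain ⟨hk1, hkℓ⟩ := hk
    calc ∑ W : Fin ℓ → Fin q,
          (if ShiftEq ℓ 1 U W then (q : ℝ)⁻¹ else 0) *
            (if ShiftEq ℓ (ℓ - k) W V then (q : ℝ) ^ ((k : ℤ) - ℓ) else 0)
        = ∑ W : Fin ℓ → Fin q,
            (if W = midW hkℓ U V then
              (if ShiftEq ℓ (ℓ - k + 1) U V then (q : ℝ)⁻¹ * (q : ℝ) ^ ((k : ℤ) - ℓ) else 0)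
            else 0) := by
          refine Finset.sum_congr rfl fun W _ => ?_
          rw [myIteMul, if_congr (mid_iff hk1 hkℓ U V W) rfl rfl]
          by_cases hw : W = midW hkℓ U V <;>
            by_cases hR : ShiftEq ℓ (ℓ - k + 1) U V <;> simp [hw, hR]
      _ = (if ShiftEq ℓ (ℓ - k + 1) U V then (q : ℝ)⁻¹ * (q : ℝ) ^ ((k : ℤ) - ℓ) else 0) := by
          rw [Finset.sum_ite_eq' Finset.univ (midW hkℓ U V)]
          simp
      _ = Gfun q ℓ U V (ℓ + 1 - k) := by
          unfold Gfun
          have h1 : ℓ - k + 1 = ℓ + 1 - k := by omega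
          have h2 : (q : ℝ)⁻¹ * (q : ℝ) ^ ((k : ℤ) - ℓ) = (q : ℝ) ^ (-((ℓ + 1 - k : ℕ) : ℤ)) := by
            rw [← zpow_neg_one, ← zpow_add₀ hq0]
            congr 1
            omega
          rw [h1, h2]

lemma sum_theta_P (q ℓ : ℕ) (hq : 1 ≤ q) (U V : Fin ℓ → Fin q) :
    ∑ W : Fin ℓ → Fin q, thetaD q ℓ U W * deBruijn q ℓ W V
      = ∑ m ∈ Finset.Ico 2 (ℓ + 1), Gfun q ℓ U V m := by
  have hq0 : (q : ℝ) ≠ 0 := Nat.cast_ne_zero.mpr (by omega)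
  unfold deBruijn thetaD
  simp only [Matrix.of_apply, Finset.sum_mul]
  rw [Finset.sum_comm]
  refine Finset.sum_nbij' (fun k => ℓ + 1 - k) (fun m => ℓ + 1 - m) ?_ ?_ ?_ ?_ ?_
  · intro a ha; simp only [Finset.mem_Ico] at *; omega
  · intro a ha; simp only [Finset.mem_Ico] at *; omega
  · intro a ha; simp only [Finset.mem_Ico] at ha; show ℓ + 1 - (ℓ + 1 - a) = a; omega
  · intro a ha; simp only [Finset.mem_Ico] at ha; show ℓ + 1 - (ℓ + 1 - a) = a; omega
  · intro k hk
    simp only [Finset.mem_Ico] at hk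
    obtain ⟨hk1, hkℓ⟩ := hk
    calc ∑ W : Fin ℓ → Fin q,
          (if ShiftEq ℓ (ℓ - k) U W then (q : ℝ) ^ ((k : ℤ) - ℓ) else 0) *
            (if ShiftEq ℓ 1 W V then (q : ℝ)⁻¹ else 0)
        = ∑ W : Fin ℓ → Fin q,
            (if W = midW' hk1 hkℓ U V then
              (if ShiftEq ℓ (ℓ - k + 1) U V then (q : ℝ) ^ ((k : ℤ) - ℓ) * (q : ℝ)⁻¹ else 0)
            else 0) := by
          refine Finset.sum_congr rfl fun W _ => ?_
          rw [myIteMul, if_congr (mid_iff' hk1 hkℓ U V W) rfl rfl]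
          by_cases hw : W = midW' hk1 hkℓ U V <;>
            by_cases hR : ShiftEq ℓ (ℓ - k + 1) U V <;> simp [hw, hR]
      _ = (if ShiftEq ℓ (ℓ - k + 1) U V then (q : ℝ) ^ ((k : ℤ) - ℓ) * (q : ℝ)⁻¹ else 0) := by
          rw [Finset.sum_ite_eq' Finset.univ (midW' hk1 hkℓ U V)]
          simp
      _ = Gfun q ℓ U V (ℓ + 1 - k) := by
          unfold Gfun
          have h1 : ℓ - k + 1 = ℓ + 1 - k := by omega
          have h2 : (q : ℝ) ^ ((k : ℤ) - ℓ) * (q : ℝ)⁻¹ = (q : ℝ) ^ (-((ℓ + 1 - k : ℕ) : ℤ)) := by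
            rw [← zpow_neg_one, ← zpow_add₀ hq0]
            congr 1
            omega
          rw [h1, h2]

lemma ico_shift {ℓ : ℕ} (hℓ : 1 ≤ ℓ) (g : ℕ → ℝ) :
    ∑ m ∈ Finset.Ico 2 (ℓ + 1), g m = (∑ m ∈ Finset.Ico 1 ℓ, g m) + g ℓ - g 1 := by
  have h1 : ∑ m ∈ Finset.Ico 1 (ℓ + 1), g m = (∑ m ∈ Finset.Ico 1 ℓ, g m) + g ℓ :=
    Finset.sum_Ico_succ_top hℓ g
  have h2 : ∑ m ∈ Finset.Ico 1 (ℓ + 1), g m = g 1 + ∑ m ∈ Finset.Ico 2 (ℓ + 1), g m :=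
    Finset.sum_eq_sum_Ico_succ_bot (by omega) g
  linarith

noncomputable def Ymat (q ℓ : ℕ) : Matrix (Fin ℓ → Fin q) (Fin ℓ → Fin q) ℝ :=
  Matrix.of fun U V =>
    (if U = V then 1 else 0) + thetaD q ℓ U V - (ℓ : ℝ) * (q : ℝ) ^ (-(ℓ : ℤ))

noncomputable def Jmat (q ℓ : ℕ) : Matrix (Fin ℓ → Fin q) (Fin ℓ → Fin q) ℝ :=
  Matrix.of fun _ _ => (q : ℝ) ^ (-(ℓ : ℤ))

lemma MY (q ℓ : ℕ) (hq : 1 ≤ q) (hℓ : 1 ≤ ℓ) :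
    (1 - deBruijn q ℓ) * Ymat q ℓ = 1 - Jmat q ℓ := by
  ext U V
  rw [Matrix.mul_apply]
  have key : ∀ W : Fin ℓ → Fin q, ((1 - deBruijn q ℓ) U W) * Ymat q ℓ W V =
      (if U = W then Ymat q ℓ W V else 0)
      - (deBruijn q ℓ U W * (if W = V then (1 : ℝ) else 0)
         + deBruijn q ℓ U W * thetaD q ℓ W V
         - deBruijn q ℓ U W * ((ℓ : ℝ) * (q : ℝ) ^ (-(ℓ : ℤ)))) := by
    intro W
    simp only [Matrix.sub_apply, Matrix.one_apply, Ymat, Matrix.of_apply]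
    by_cases h : U = W <;> by_cases h' : W = V <;> by_cases h'' : U = V <;> simp_all <;> ring
  rw [Finset.sum_congr rfl fun W _ => key W, Finset.sum_sub_distrib,
    Finset.sum_ite_eq, if_pos (Finset.mem_univ U), Finset.sum_sub_distrib,
    Finset.sum_add_distrib]
  have s1 : ∑ W : Fin ℓ → Fin q, deBruijn q ℓ U W * (if W = V then (1 : ℝ) else 0)
      = deBruijn q ℓ U V := by
    simp only [mul_ite, mul_one, mul_zero]
    rw [Finset.sum_ite_eq' Finset.univ V]
    simp
  have s3 : ∑ W : Fin ℓ → Fin q, deBruijn q ℓ U W * ((ℓ : ℝ) * (q : ℝ) ^ (-(ℓ : ℤ)))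
      = (ℓ : ℝ) * (q : ℝ) ^ (-(ℓ : ℤ)) := by
    rw [← Finset.sum_mul, sum_row q ℓ hq hℓ U, one_mul]
  rw [s1, sum_P_theta q ℓ hq U V, s3, ico_shift hℓ, ← theta_eq, G_top, G_one]
  simp only [Ymat, Jmat, Matrix.of_apply, Matrix.sub_apply, Matrix.one_apply]
  ring

lemma YM (q ℓ : ℕ) (hq : 1 ≤ q) (hℓ : 1 ≤ ℓ) :
    Ymat q ℓ * (1 - deBruijn q ℓ) = 1 - Jmat q ℓ := by
  ext U V
  rw [Matrix.mul_apply]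
  have key : ∀ W : Fin ℓ → Fin q, Ymat q ℓ U W * ((1 - deBruijn q ℓ) W V) =
      (if W = V then Ymat q ℓ U W else 0)
      - ((if U = W then (1 : ℝ) else 0) * deBruijn q ℓ W V
         + thetaD q ℓ U W * deBruijn q ℓ W V
         - ((ℓ : ℝ) * (q : ℝ) ^ (-(ℓ : ℤ))) * deBruijn q ℓ W V) := by
    intro W
    simp only [Matrix.sub_apply, Matrix.one_apply, Ymat, Matrix.of_apply]
    by_cases h : W = V <;> by_cases h' : U = W <;> by_cases h'' : U = V <;> simp_all <;> ring
  rw [Finset.sum_congr rfl fun W _ => key W, Finset.sum_sub_distrib,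
    Finset.sum_ite_eq', if_pos (Finset.mem_univ V), Finset.sum_sub_distrib,
    Finset.sum_add_distrib]
  have s1 : ∑ W : Fin ℓ → Fin q, (if U = W then (1 : ℝ) else 0) * deBruijn q ℓ W V
      = deBruijn q ℓ U V := by
    simp only [ite_mul, one_mul, zero_mul]
    rw [Finset.sum_ite_eq, if_pos (Finset.mem_univ U)]
  have s3 : ∑ W : Fin ℓ → Fin q, ((ℓ : ℝ) * (q : ℝ) ^ (-(ℓ : ℤ))) * deBruijn q ℓ W V
      = (ℓ : ℝ) * (q : ℝ) ^ (-(ℓ : ℤ)) := by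
    rw [← Finset.mul_sum, sum_col q ℓ hq hℓ V, mul_one]
  rw [s1, sum_theta_P q ℓ hq U V, s3, ico_shift hℓ, ← theta_eq, G_top, G_one]
  simp only [Ymat, Jmat, Matrix.of_apply, Matrix.sub_apply, Matrix.one_apply]
  ring

lemma JY (q ℓ : ℕ) (hq : 1 ≤ q) (hℓ : 1 ≤ ℓ) : Jmat q ℓ * Ymat q ℓ = 0 := by
  have hq0 : (q : ℝ) ≠ 0 := Nat.cast_ne_zero.mpr (by omega)
  ext U V
  rw [Matrix.mul_apply]
  have hsum : ∑ W : Fin ℓ → Fin q, Ymat q ℓ W V = 0 := by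
    simp only [Ymat, Matrix.of_apply]
    rw [Finset.sum_sub_distrib, Finset.sum_add_distrib, sum_theta_col q ℓ hq hℓ V,
      Finset.sum_ite_eq' Finset.univ V (fun _ => (1 : ℝ)), if_pos (Finset.mem_univ V),
      Finset.sum_const, Finset.card_univ]
    have hcard : Fintype.card (Fin ℓ → Fin q) = q ^ ℓ := by simp
    rw [hcard, nsmul_eq_mul]
    have : ((q ^ ℓ : ℕ) : ℝ) * ((ℓ : ℝ) * (q : ℝ) ^ (-(ℓ : ℤ))) = (ℓ : ℝ) := by
      push_cast
      rw [mul_comm ((q : ℝ) ^ ℓ), mul_assoc, ← zpow_natCast (q : ℝ) ℓ, ← zpow_add₀ hq0]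
      simp
    rw [this]
    ring
  simp only [Jmat, Matrix.of_apply]
  rw [← Finset.mul_sum, hsum, mul_zero, Matrix.zero_apply]

lemma JM (q ℓ : ℕ) (hq : 1 ≤ q) (hℓ : 1 ≤ ℓ) : Jmat q ℓ * (1 - deBruijn q ℓ) = 0 := by
  ext U V
  rw [Matrix.mul_apply]
  have hsum : ∑ W : Fin ℓ → Fin q, (1 - deBruijn q ℓ) W V = 0 := by
    simp only [Matrix.sub_apply, Matrix.one_apply]
    rw [Finset.sum_sub_distrib, sum_col q ℓ hq hℓ V,
      Finset.sum_ite_eq' Finset.univ V (fun _ => (1 : ℝ)), if_pos (Finset.mem_univ V)]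
    ring
  simp only [Jmat, Matrix.of_apply]
  rw [← Finset.mul_sum, hsum, mul_zero, Matrix.zero_apply]

open Classical in
/-- The group inverse of `I - P_ℓ` has entries `1{U=V} + θ_{UV} - ℓ q^{-ℓ}`. -/
theorem statement9 (q ℓ : ℕ) (hq : 2 ≤ q) (hℓ : 1 ≤ ℓ)
    (X : Matrix (Fin ℓ → Fin q) (Fin ℓ → Fin q) ℝ)
    (h1 : (1 - deBruijn q ℓ) * X = X * (1 - deBruijn q ℓ))
    (h2 : (1 - deBruijn q ℓ) * X * (1 - deBruijn q ℓ) = 1 - deBruijn q ℓ)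
    (h3 : X * (1 - deBruijn q ℓ) * X = X) :
    ∀ U V : Fin ℓ → Fin q,
      X U V = (if U = V then 1 else 0) + thetaD q ℓ U V - ℓ * (q : ℝ) ^ (-(ℓ : ℤ)) := by
  have hq1 : 1 ≤ q := by omega
  set M := 1 - deBruijn q ℓ with hMdef
  set Y := Ymat q ℓ with hYdef
  have h4 : M * Y = 1 - Jmat q ℓ := MY q ℓ hq1 hℓ
  have h5 : Y * M = 1 - Jmat q ℓ := YM q ℓ hq1 hℓ
  have h6 : Jmat q ℓ * Y = 0 := JY q ℓ hq1 hℓ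
  have h7 : Jmat q ℓ * M = 0 := JM q ℓ hq1 hℓ
  have hMYM : M * Y * M = M := by rw [h4, Matrix.sub_mul, Matrix.one_mul, h7, sub_zero]
  have hYMY : Y * M * Y = Y := by rw [h5, Matrix.sub_mul, Matrix.one_mul, h6, sub_zero]
  have hF : M * Y = Y * M := h4.trans h5.symm
  have step3 : M * Y = (X * M) * (M * Y) := by
    calc M * Y = (M * X * M) * Y := by rw [h2]
      _ = (M * X) * (M * Y) := by rw [mul_assoc (M * X) M Y]
      _ = (X * M) * (M * Y) := by rw [h1]
  have step1 : X * M = (X * M) * (Y * M) := by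
    calc X * M = X * (M * Y * M) := by rw [hMYM]
      _ = X * (M * (Y * M)) := by rw [mul_assoc M Y M]
      _ = (X * M) * (Y * M) := by rw [mul_assoc X M (Y * M)]
  have hEF : X * M = M * Y := by
    calc X * M = (X * M) * (Y * M) := step1
      _ = (X * M) * (M * Y) := by rw [hF]
      _ = M * Y := step3.symm
  have hXY : X = Y := by
    calc X = X * M * X := h3.symm
      _ = (M * Y) * X := by rw [hEF]
      _ = (Y * M) * X := by rw [hF]
      _ = Y * (M * X) := by rw [mul_assoc]
      _ = Y * (X * M) := by rw [h1]
      _ = Y * (M * Y) := by rw [hEF]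
      _ = Y * M * Y := by rw [mul_assoc]
      _ = Y := hYMY
  intro U V
  rw [hXY, hYdef]
  simp only [Ymat, Matrix.of_apply]
end

section
/- For the de Bruijn chain, θ_{UV} = (∑_{j=1}^{ℓ-1} P_ℓ^j)_{U,V}, i.e., the overlap index of U against V equals the (U,V) entry of the sum of the first ℓ−1 powers of the transition matrix. -/
open Classical in
lemma deBruijn_pow_apply (q ℓ : ℕ) (V : Fin ℓ → Fin q) :
    ∀ j, j ≤ ℓ → ∀ U, (deBruijn q ℓ ^ j) U V
      = if ShiftEq ℓ j U V then ((q : ℝ)⁻¹) ^ j else 0 := by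
  intro j
  induction j with
  | zero =>
    intro _ U
    have hiff : ShiftEq ℓ 0 U V ↔ U = V := by
      constructor
      · intro h
        funext t
        have := h t.1 (by omega)
        simpa using this
      · rintro rfl i hi
        rfl
    rw [pow_zero, Matrix.one_apply]
    simp [hiff]
  | succ j ih =>
    intro hj U
    have hV : ℓ - 1 - j < ℓ := by omega
    set W₀ : Fin ℓ → Fin q :=
      fun t => if h : (t : ℕ) + 1 < ℓ then U ⟨(t : ℕ) + 1, h⟩ else V ⟨ℓ - 1 - j, hV⟩ with hW₀
    have h1 : ShiftEq ℓ 1 U W₀ := by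
      intro i h
      simp only [hW₀]
      rw [dif_pos h]
    rw [pow_succ', Matrix.mul_apply]
    by_cases hS : ShiftEq ℓ (j + 1) U V
    · have h2 : ShiftEq ℓ j W₀ V := by
        intro i h
        simp only [hW₀]
        by_cases h' : i + j + 1 < ℓ
        · rw [dif_pos h']
          exact hS i (by omega)
        · rw [dif_neg (by omega)]
          congr 1
          exact Fin.ext (show ℓ - 1 - j = i by omega)
      rw [if_pos hS]
      have hsum : ∀ W, deBruijn q ℓ U W * (deBruijn q ℓ ^ j) W V
          = if W = W₀ then ((q : ℝ)⁻¹) ^ (j + 1) else 0 := by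
        intro W
        rw [ih (by omega) W]
        by_cases hW : W = W₀
        · subst hW
          rw [if_pos h2, if_pos rfl]
          have hd : deBruijn q ℓ U W₀ = (q : ℝ)⁻¹ := by
            simp only [deBruijn, Matrix.of_apply]
            rw [if_pos h1]
          rw [hd, pow_succ']
        · rw [if_neg hW]
          by_cases hA : ShiftEq ℓ 1 U W
          · by_cases hB : ShiftEq ℓ j W V
            · exfalso
              apply hW
              funext t
              have htl := t.2
              by_cases ht : (t : ℕ) + 1 < ℓ
              · simp only [hW₀]
                rw [dif_pos ht]
                exact (hA t.1 ht).symm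
              · simp only [hW₀]
                rw [dif_neg ht]
                have hB' := hB (ℓ - 1 - j) (by omega)
                have hte : t = ⟨ℓ - 1 - j + j, by omega⟩ := Fin.ext (show (t:ℕ) = ℓ - 1 - j + j by omega)
                rw [hte]
                exact hB'
            · rw [if_neg hB, mul_zero]
          · have : deBruijn q ℓ U W = 0 := by
              simp only [deBruijn, Matrix.of_apply]
              rw [if_neg hA]
            rw [this, zero_mul]
      rw [Finset.sum_congr rfl fun W _ => hsum W]
      simp
    · rw [if_neg hS]
      apply Finset.sum_eq_zero
      intro W _
      by_cases hA : ShiftEq ℓ 1 U W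
      · by_cases hB : ShiftEq ℓ j W V
        · exfalso
          apply hS
          intro i h
          have e1 := hA (i + j) (by omega)
          have e2 := hB i (by omega)
          have : U ⟨i + (j + 1), h⟩ = U ⟨i + j + 1, by omega⟩ := rfl
          rw [this, e1, e2]
        · rw [ih (by omega) W, if_neg hB, mul_zero]
      · have : deBruijn q ℓ U W = 0 := by
          simp only [deBruijn, Matrix.of_apply]
          rw [if_neg hA]
        rw [this, zero_mul]

/-- `θ_{UV} = (∑_{j=1}^{ℓ-1} P_ℓ^j)_{U,V}`. -/
theorem statement10 (q ℓ : ℕ) (hq : 2 ≤ q) (U V : Fin ℓ → Fin q) :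
    thetaD q ℓ U V = ∑ j ∈ Finset.Ico 1 ℓ, (deBruijn q ℓ ^ j) U V := by
  classical
  unfold thetaD
  rw [Finset.sum_congr rfl (fun j hj => deBruijn_pow_apply q ℓ V j
    (by simp [Finset.mem_Ico] at hj; omega) U)]
  refine Finset.sum_nbij' (fun k => ℓ - k) (fun k => ℓ - k) ?_ ?_ ?_ ?_ ?_
  · intro k hk; simp [Finset.mem_Ico] at hk ⊢; omega
  · intro k hk; simp [Finset.mem_Ico] at hk ⊢; omega
  · intro k hk; simp only [Finset.mem_Ico] at hk; show ℓ - (ℓ - k) = k; omega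
  · intro k hk; simp only [Finset.mem_Ico] at hk; show ℓ - (ℓ - k) = k; omega
  · intro k hk
    simp only [Finset.mem_Ico] at hk
    have hexp : (q : ℝ) ^ ((k : ℤ) - ℓ) = ((q : ℝ)⁻¹) ^ (ℓ - k) := by
      have : (k : ℤ) - ℓ = -((ℓ - k : ℕ) : ℤ) := by push_cast; omega
      rw [this, zpow_neg, zpow_natCast, inv_pow]
    rw [hexp]
end

section
/- Let P be an irreducible, aperiodic stochastic matrix on finite W and g : W → ℤ. If the set {(g(Q), ℓ(Q)) : Q a closed path} generates ℤ² as a group (where g(Q) = ∑_{k=1}^{ℓ} g(i_k) along path i_0,…,i_ℓ of length ℓ), then for every t with 0 < |t| ≤ π, every eigenvalue λ of the twisted matrix P(e^{it}) (with entries P_{jk} e^{i g(k) t}) satisfies |λ| < 1. -/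
/-!
Let `v` be an eigenvector of `P(e^{it})` for an eigenvalue `λ` with `|λ| ≥ 1`. At a coordinate `j`
where `|v|` is maximal, the eigen-equation writes `λ v_j` as a `P j`-weighted average of the
numbers `e^{i g(k) t} v_k`, all of modulus at most `|v_j|`; since the average has modulus at least
`|v_j|`, every term of positive weight equals `λ v_j`. Irreducibility spreads maximality of `|v|`
to all coordinates, and multiplying these relations along a closed path `Q` gives
`e^{i g(Q) t} = λ^{ℓ(Q)}`. The pairs `(a, b)` with `e^{i a t} = λ^b` form a subgroup of `ℤ²`,
which therefore contains `(1, 0)`; but `e^{it} ≠ 1` for `0 < |t| ≤ π`.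
-/

open Finset Complex
open scoped Matrix

theorem sum_mul_norm_sub_sq_eq {ι E : Type*} [Fintype ι] [NormedAddCommGroup E]
    [InnerProductSpace ℝ E] {p : ι → ℝ} (hp : ∑ i, p i = 1) (w : ι → E) :
    ∑ i, p i * ‖∑ j, p j • w j - w i‖ ^ 2 = ∑ i, p i * ‖w i‖ ^ 2 - ‖∑ j, p j • w j‖ ^ 2 := by
  set c := ∑ j, p j • w j
  have hc : ∑ i, p i * inner ℝ c (w i) = ‖c‖ ^ 2 := by
    rw [← real_inner_self_eq_norm_sq, inner_sum]
    simp only [real_inner_smul_right, c]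
  simp_rw [norm_sub_sq_real, mul_add, mul_sub, sum_add_distrib, sum_sub_distrib, ← sum_mul, hp]
  rw [← hc, mul_sum]
  simp only [mul_left_comm _ (2 : ℝ), ← mul_sum]
  ring

theorem eq_sum_smul_of_le_norm_sum_smul {ι E : Type*} [Fintype ι] [NormedAddCommGroup E]
    [InnerProductSpace ℝ E] {p : ι → ℝ} (hp0 : ∀ i, 0 ≤ p i) (hp : ∑ i, p i = 1)
    {w : ι → E} {m : ℝ} (hw : ∀ i, ‖w i‖ ≤ m) (hm : m ≤ ‖∑ i, p i • w i‖) {i : ι}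
    (hi : 0 < p i) : w i = ∑ j, p j • w j := by
  have hm0 : 0 ≤ m := (norm_nonneg _).trans (hw i)
  have hterm : ∀ j ∈ univ, 0 ≤ p j * ‖∑ k, p k • w k - w j‖ ^ 2 := fun j _ => by
    have := hp0 j; positivity
  have hle : ∑ j, p j * ‖∑ k, p k • w k - w j‖ ^ 2 ≤ 0 := by
    rw [sum_mul_norm_sub_sq_eq hp]
    calc ∑ j, p j * ‖w j‖ ^ 2 - ‖∑ k, p k • w k‖ ^ 2 ≤ ∑ j, p j * m ^ 2 - m ^ 2 := by
          gcongr with j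
          · exact hp0 j
          · exact hw j
      _ = 0 := by rw [← sum_mul, hp, one_mul, sub_self]
  have hzero := (sum_eq_zero_iff_of_nonneg hterm).1 (le_antisymm hle (sum_nonneg hterm)) i
    (mem_univ i)
  rw [mul_eq_zero, sq_eq_zero_iff, norm_eq_zero, sub_eq_zero] at hzero
  exact (hzero.resolve_left hi.ne').symm

theorem Matrix.mem_of_pow_apply_ne_zero {W R : Type*} [Fintype W] [DecidableEq W] [Semiring R]
    {P : Matrix W W R} {S : Set W} (hS : ∀ j k, j ∈ S → P j k ≠ 0 → k ∈ S) :
    ∀ (n : ℕ) {i j : W}, (P ^ n) i j ≠ 0 → i ∈ S → j ∈ S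
  | 0, i, j, hij, hi => by
    obtain rfl : i = j := by_contra fun hne => hij (by simp [Matrix.one_apply_ne hne])
    exact hi
  | n + 1, i, j, hij, hi => by
    rw [pow_succ, Matrix.mul_apply] at hij
    obtain ⟨l, -, hl⟩ := exists_ne_zero_of_sum_ne_zero hij
    exact hS l j (mem_of_pow_apply_ne_zero hS n (left_ne_zero_of_mul hl) hi)
      (right_ne_zero_of_mul hl)

theorem Matrix.exists_mulVec_eq_smul_of_mem_spectrum {n K : Type*} [Fintype n] [DecidableEq n]
    [Field K] {A : Matrix n n K} {μ : K} (h : μ ∈ spectrum K A) : ∃ v ≠ 0, A *ᵥ v = μ • v := by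
  obtain ⟨v, hv⟩ :=
    (Module.End.hasEigenvalue_iff_mem_spectrum.2 (A.spectrum_toLin' ▸ h)).exists_hasEigenvector
  exact ⟨v, hv.2, by simpa using hv.apply_eq_smul⟩

section TwistedEigenvector

variable {W : Type*} [Fintype W] {P : Matrix W W ℝ} {u v : W → ℂ} {lam : ℂ}

theorem mul_eq_mul_of_forall_norm_le (hnn : ∀ i j, 0 ≤ P i j) (hrow : ∀ i, ∑ j, P i j = 1)
    (hu : ∀ k, ‖u k‖ = 1) (hv : Matrix.of (fun j k => (P j k : ℂ) * u k) *ᵥ v = lam • v)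
    (hlam : 1 ≤ ‖lam‖) {j k : W} (hmax : ∀ i, ‖v i‖ ≤ ‖v j‖) (hjk : 0 < P j k) :
    u k * v k = lam * v j := by
  have heig : ∑ i, P j i • (u i * v i) = lam * v j := by
    simpa [Matrix.mulVec, dotProduct, Complex.real_smul, mul_assoc] using congrFun hv j
  rw [← heig]
  refine eq_sum_smul_of_le_norm_sum_smul (hnn j) (hrow j) (w := fun i => u i * v i)
    (m := ‖v j‖) (fun i => ?_) ?_ hjk
  · rw [norm_mul, hu, one_mul]
    exact hmax i
  · rw [heig, norm_mul]
    exact le_mul_of_one_le_left (norm_nonneg _) hlam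

theorem norm_eq_of_forall_norm_le (hnn : ∀ i j, 0 ≤ P i j) (hrow : ∀ i, ∑ j, P i j = 1)
    (hu : ∀ k, ‖u k‖ = 1) (hv : Matrix.of (fun j k => (P j k : ℂ) * u k) *ᵥ v = lam • v)
    (hlam : 1 ≤ ‖lam‖) {j k : W} (hmax : ∀ i, ‖v i‖ ≤ ‖v j‖) (hjk : 0 < P j k) :
    ‖v k‖ = ‖v j‖ := by
  have h := congrArg norm (mul_eq_mul_of_forall_norm_le hnn hrow hu hv hlam hmax hjk)
  rw [norm_mul, norm_mul, hu, one_mul] at h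
  exact (hmax k).antisymm (h ▸ le_mul_of_one_le_left (norm_nonneg _) hlam)

theorem norm_eq_norm_of_irreducible [DecidableEq W] (hnn : ∀ i j, 0 ≤ P i j)
    (hrow : ∀ i, ∑ j, P i j = 1) (hirr : ∀ i j, ∃ n : ℕ, 1 ≤ n ∧ 0 < (P ^ n) i j)
    (hu : ∀ k, ‖u k‖ = 1) (hv : Matrix.of (fun j k => (P j k : ℂ) * u k) *ᵥ v = lam • v)
    (hlam : 1 ≤ ‖lam‖) (j k : W) : ‖v j‖ = ‖v k‖ := by
  have : Nonempty W := ⟨j⟩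
  obtain ⟨i, -, hi⟩ := exists_max_image univ (fun i => ‖v i‖) univ_nonempty
  have hall : ∀ l, ‖v l‖ = ‖v i‖ := fun l => by
    obtain ⟨n, -, hn⟩ := hirr i l
    refine Matrix.mem_of_pow_apply_ne_zero (S := {l | ‖v l‖ = ‖v i‖}) (fun a b ha hab => ?_) n
      hn.ne' rfl
    simp only [Set.mem_ofPred_eq] at ha ⊢
    rw [← ha]
    exact norm_eq_of_forall_norm_le hnn hrow hu hv hlam (fun c => ha ▸ hi c (mem_univ c))
      ((hnn a b).lt_of_ne' hab)
  rw [hall j, hall k]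

theorem prod_mul_eq_pow_mul_of_path (hnn : ∀ i j, 0 ≤ P i j) (hrow : ∀ i, ∑ j, P i j = 1)
    (hu : ∀ k, ‖u k‖ = 1) (hv : Matrix.of (fun j k => (P j k : ℂ) * u k) *ᵥ v = lam • v)
    (hlam : 1 ≤ ‖lam‖) (hconst : ∀ j k, ‖v j‖ = ‖v k‖) :
    ∀ (n : ℕ) (p : ℕ → W), (∀ k < n, 0 < P (p k) (p (k + 1))) →
      (∏ k ∈ range n, u (p (k + 1))) * v (p n) = lam ^ n * v (p 0)
  | 0, p, _ => by simp
  | n + 1, p, hp => by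
    rw [prod_range_succ, mul_assoc, mul_eq_mul_of_forall_norm_le hnn hrow hu hv hlam
      (fun i => (hconst i (p n)).le) (hp n n.lt_succ_self), mul_left_comm,
      prod_mul_eq_pow_mul_of_path hnn hrow hu hv hlam hconst n p
        (fun k hk => hp k (hk.trans n.lt_succ_self)), pow_succ]
    ring

end TwistedEigenvector

theorem eq_one_of_zpow_eq_zpow_of_closure_eq_top {G : Type*} [CommGroup G] {x y : G}
    {S : Set (ℤ × ℤ)} (hS : AddSubgroup.closure S = ⊤) (h : ∀ q ∈ S, x ^ q.1 = y ^ q.2) :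
    x = 1 := by
  have key : ∀ q : ℤ × ℤ, x ^ q.1 = y ^ q.2 := fun q => by
    induction (hS ▸ AddSubgroup.mem_top q : q ∈ AddSubgroup.closure S) using
      AddSubgroup.closure_induction with
    | mem q hq => exact h q hq
    | zero => simp
    | add a b _ _ ha hb => rw [Prod.fst_add, Prod.snd_add, zpow_add, zpow_add, ha, hb]
    | neg a _ ha => rw [Prod.fst_neg, Prod.snd_neg, zpow_neg, zpow_neg, ha]
  simpa using key (1, 0)

theorem Complex.exp_mul_I_ne_one {t : ℝ} (h0 : t ≠ 0) (h : |t| < 2 * Real.pi) :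
    exp (t * I) ≠ 1 := by
  rw [Ne, exp_eq_one_iff]
  rintro ⟨n, hn⟩
  have ht : t = n * (2 * Real.pi) := by
    have := congrArg im hn
    simpa using this
  rcases eq_or_ne n 0 with rfl | hn0
  · simp_all
  · have : (1 : ℝ) ≤ |(n : ℝ)| := by exact_mod_cast Int.one_le_abs hn0
    rw [ht, abs_mul, abs_of_pos Real.two_pi_pos] at h
    nlinarith [Real.two_pi_pos]

theorem statement13_general {W : Type*} [Fintype W] [DecidableEq W] (P : Matrix W W ℝ)
    (hnn : ∀ i j, 0 ≤ P i j) (hrow : ∀ i, ∑ j, P i j = 1)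
    (hirr : ∀ i j, ∃ n : ℕ, 1 ≤ n ∧ 0 < (P ^ n) i j)
    (g : W → ℤ)
    (hgen : AddSubgroup.closure {v : ℤ × ℤ | ∃ (n : ℕ) (p : ℕ → W), 1 ≤ n ∧
        (∀ k < n, 0 < P (p k) (p (k + 1))) ∧ p n = p 0 ∧
        v = (∑ k ∈ Finset.range n, g (p (k + 1)), (n : ℤ))} = ⊤)
    (t : ℝ) (ht0 : 0 < |t|) (htπ : |t| ≤ Real.pi) (lam : ℂ)
    (hlam : lam ∈ spectrum ℂ
      (Matrix.of fun j k : W => (P j k : ℂ) * Complex.exp (Complex.I * (g k : ℂ) * (t : ℂ)))) :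
    ‖lam‖ < 1 := by
  by_contra! hlam1
  have hu : ∀ k, ‖exp (I * g k * t)‖ = 1 := fun k => by simp [norm_exp]
  obtain ⟨v, hv0, hv⟩ := Matrix.exists_mulVec_eq_smul_of_mem_spectrum hlam
  have hconst := norm_eq_norm_of_irreducible hnn hrow hirr hu hv hlam1
  obtain ⟨k₀, hk₀⟩ := Function.ne_iff.1 hv0
  have hv_ne : ∀ k, v k ≠ 0 := fun k => norm_ne_zero_iff.1 (hconst k k₀ ▸ norm_ne_zero_iff.2 hk₀)
  have hlam0 : lam ≠ 0 := norm_pos_iff.1 (one_pos.trans_le hlam1)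
  refine exp_mul_I_ne_one (abs_pos.1 ht0) (htπ.trans_lt (by linarith [Real.pi_pos]))
    (congrArg Units.val (eq_one_of_zpow_eq_zpow_of_closure_eq_top hgen
      (x := Units.mk0 _ (exp_ne_zero (t * I))) (y := Units.mk0 lam hlam0) ?_))
  rintro _ ⟨n, p, -, hp, hclosed, rfl⟩
  have hcycle := prod_mul_eq_pow_mul_of_path hnn hrow hu hv hlam1 hconst n p hp
  rw [hclosed] at hcycle
  ext
  simp only [Units.val_zpow_eq_zpow_val, Units.val_mk0]
  calc exp (t * I) ^ (∑ k ∈ range n, g (p (k + 1)))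
      = ∏ k ∈ range n, exp (I * g (p (k + 1)) * t) := by
        rw [← exp_int_mul, ← exp_sum]
        push_cast
        rw [sum_mul]
        exact congrArg exp (sum_congr rfl fun k _ => by ring)
    _ = lam ^ (n : ℤ) := by
        rw [zpow_natCast]
        exact mul_right_cancel₀ (hv_ne _) hcycle

/-- If the pairs (value, length) of closed paths of an irreducible aperiodic finite-state
Markov chain generate `ℤ²`, then for every `0 < |t| ≤ π` all eigenvalues of the twisted
matrix `P(e^{it})` have modulus strictly less than `1`. -/
theorem statement13 {W : Type*} [Fintype W] [DecidableEq W] (P : Matrix W W ℝ)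
    (hnn : ∀ i j, 0 ≤ P i j) (hrow : ∀ i, ∑ j, P i j = 1)
    (hirr : ∀ i j, ∃ n : ℕ, 1 ≤ n ∧ 0 < (P ^ n) i j)
    (g : W → ℤ)
    (haper : AddSubgroup.closure {L : ℤ | ∃ (n : ℕ) (p : ℕ → W), 1 ≤ n ∧
        (∀ k < n, 0 < P (p k) (p (k + 1))) ∧ p n = p 0 ∧ L = n} = ⊤)
    (hgen : AddSubgroup.closure {v : ℤ × ℤ | ∃ (n : ℕ) (p : ℕ → W), 1 ≤ n ∧
        (∀ k < n, 0 < P (p k) (p (k + 1))) ∧ p n = p 0 ∧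
        v = (∑ k ∈ Finset.range n, g (p (k + 1)), (n : ℤ))} = ⊤)
    (t : ℝ) (ht0 : 0 < |t|) (htπ : |t| ≤ Real.pi) (lam : ℂ)
    (hlam : lam ∈ spectrum ℂ
      (Matrix.of fun j k : W => (P j k : ℂ) * Complex.exp (Complex.I * (g k : ℂ) * (t : ℂ)))) :
    ‖lam‖ < 1 :=
  statement13_general P hnn hrow hirr g hgen t ht0 htπ lam hlam
end

section
/- Equivalence of aperiodicity-failure characterizations: for an irreducible aperiodic finite-state stochastic matrix P and g : W → ℤ, the condition '{(g(Q), ℓ(Q)) : Q closed path} generates ℤ²' FAILS if and only if there exist an integer N ≥ 2, an integer b, and integers γ_i (i ∈ W) such that γ_j ≡ γ_i + g(j) − b (mod N) whenever P_{ij} > 0. -/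
/-!
Write `H ≤ ℤ²` for the subgroup generated by the vectors `(g(Q), ℓ(Q))`. Aperiodicity says that the
lengths `ℓ(Q)` generate `ℤ`, so `H` contains some `(b, 1)`, and then `H` is determined by the
subgroup `{x | (x, 0) ∈ H} = Nℤ`: `H` is proper iff `N ≠ 1`, i.e. iff `H` lies in the kernel of
`(x, n) ↦ x - n b mod N` for some `N ≥ 2`. The latter says that every closed path has weight
`≡ 0 (mod N)` for the edge weights `g(j) - b`, and on a strongly connected graph this holds iff these
weights are, mod `N`, the differences `γ_j - γ_i` of a potential `γ`.
-/

open Finset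

section Walks

variable {W : Type*}

/-- As in the theorem, a walk of length `n` is encoded by its vertices `p 0, …, p n`; the later
values of `p` are irrelevant. -/
def IsWalk (r : W → W → Prop) (n : ℕ) (p : ℕ → W) : Prop :=
  ∀ k < n, r (p k) (p (k + 1))

def walkSum (f : W → W → ℤ) (n : ℕ) (p : ℕ → W) : ℤ :=
  ∑ k ∈ range n, f (p k) (p (k + 1))

def walkAppend (n : ℕ) (p q : ℕ → W) : ℕ → W :=
  fun k => if k ≤ n then p k else q (k - n)

def edgeWalk (i j : W) : ℕ → W :=
  fun k => if k = 0 then i else j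

variable {r : W → W → Prop} {f : W → W → ℤ} {n m : ℕ} {p q : ℕ → W}

@[simp]
lemma walkAppend_zero : walkAppend n p q 0 = p 0 := by
  simp [walkAppend]

lemma walkAppend_add (h : q 0 = p n) : walkAppend n p q (n + m) = q m := by
  rcases m.eq_zero_or_pos with rfl | hm
  · simp [walkAppend, h]
  · simp [walkAppend, show ¬ n + m ≤ n by omega]

lemma walkAppend_of_le {k : ℕ} (hk : k ≤ n) : walkAppend n p q k = p k := by
  simp [walkAppend, hk]

lemma IsWalk.append (hp : IsWalk r n p) (hq : IsWalk r m q) (h : q 0 = p n) :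
    IsWalk r (n + m) (walkAppend n p q) := by
  intro k hk
  rcases lt_or_ge k n with hkn | hkn
  · rw [walkAppend_of_le hkn.le, walkAppend_of_le hkn]
    exact hp k hkn
  · obtain ⟨k, rfl⟩ := Nat.exists_eq_add_of_le hkn
    rw [walkAppend_add h, add_assoc, walkAppend_add h]
    exact hq k (by omega)

lemma walkSum_append (h : q 0 = p n) :
    walkSum f (n + m) (walkAppend n p q) = walkSum f n p + walkSum f m q := by
  rw [walkSum, sum_range_add]
  congr 1
  · exact sum_congr rfl fun k hk => by
      rw [walkAppend_of_le (by simp at hk; omega), walkAppend_of_le (by simp at hk; omega)]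
  · exact sum_congr rfl fun k _ => by
      rw [walkAppend_add h, add_assoc, walkAppend_add h]

lemma isWalk_edgeWalk {i j : W} (h : r i j) : IsWalk r 1 (edgeWalk i j) := by
  simpa [IsWalk, edgeWalk] using h

@[simp]
lemma walkSum_edgeWalk (i j : W) : walkSum f 1 (edgeWalk i j) = f i j := by
  simp [walkSum, edgeWalk]

lemma IsWalk.modEq_walkSum {N : ℤ} {γ : W → ℤ}
    (hγ : ∀ i j, r i j → γ j ≡ γ i + f i j [ZMOD N]) (hp : IsWalk r n p) :
    γ (p n) ≡ γ (p 0) + walkSum f n p [ZMOD N] := by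
  induction n with
  | zero => simp [walkSum]
  | succ n ih =>
    calc γ (p (n + 1)) ≡ γ (p n) + f (p n) (p (n + 1)) [ZMOD N] := hγ _ _ (hp n n.lt_succ_self)
      _ ≡ γ (p 0) + walkSum f n p + f (p n) (p (n + 1)) [ZMOD N] :=
        (ih fun k hk => hp k (by omega)).add_right _
      _ = γ (p 0) + walkSum f (n + 1) p := by simp only [walkSum, sum_range_succ, add_assoc]

lemma walkSum_modEq_of_closed {N : ℤ} (hconn : ∀ i j, ∃ n p, p 0 = i ∧ p n = j ∧ IsWalk r n p)
    (hclosed : ∀ n p, IsWalk r n p → p n = p 0 → N ∣ walkSum f n p)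
    (hp : IsWalk r n p) (hq : IsWalk r m q) (h0 : p 0 = q 0) (hend : p n = q m) :
    walkSum f n p ≡ walkSum f m q [ZMOD N] := by
  obtain ⟨l, t, ht0, htl, ht⟩ := hconn (p n) (p 0)
  have hclose {n : ℕ} {p : ℕ → W} (hp : IsWalk r n p) (hp0 : p 0 = t l) (hpn : t 0 = p n) :
      walkSum f n p + walkSum f l t ≡ 0 [ZMOD N] := by
    rw [Int.modEq_zero_iff_dvd, ← walkSum_append hpn]
    exact hclosed _ _ (hp.append ht hpn) (by rw [walkAppend_add hpn, walkAppend_zero, hp0])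
  exact Int.ModEq.add_right_cancel' _ <|
    (hclose hp htl.symm ht0).trans (hclose hq (h0 ▸ htl.symm) (hend ▸ ht0)).symm

lemma exists_potential_iff {N : ℤ} (hconn : ∀ i j, ∃ n p, p 0 = i ∧ p n = j ∧ IsWalk r n p) :
    (∃ γ : W → ℤ, ∀ i j, r i j → γ j ≡ γ i + f i j [ZMOD N]) ↔
      ∀ n p, IsWalk r n p → p n = p 0 → N ∣ walkSum f n p := by
  constructor
  · rintro ⟨γ, hγ⟩ n p hp hclosed
    have := hp.modEq_walkSum hγ
    rw [hclosed] at this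
    exact Int.modEq_zero_iff_dvd.1 <| Int.ModEq.add_left_cancel' (γ (p 0)) <| by simpa using this.symm
  · intro hclosed
    rcases isEmpty_or_nonempty W with hW | ⟨⟨w₀⟩⟩
    · exact ⟨isEmptyElim, isEmptyElim⟩
    choose len walk hwalk0 hwalkn hwalk using hconn w₀
    refine ⟨fun i => walkSum f (len i) (walk i), fun i j hij => ?_⟩
    have hstep : edgeWalk i j 0 = walk i (len i) := (hwalkn i).symm
    calc walkSum f (len j) (walk j)
        ≡ walkSum f (len i + 1) (walkAppend (len i) (walk i) (edgeWalk i j)) [ZMOD N] :=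
          walkSum_modEq_of_closed hconn hclosed (hwalk j)
            ((hwalk i).append (isWalk_edgeWalk hij) hstep) (by simp [hwalk0])
            (by rw [walkAppend_add hstep, hwalkn]; rfl)
      _ = walkSum f (len i) (walk i) + f i j := by rw [walkSum_append hstep, walkSum_edgeWalk]

end Walks

lemma Matrix.exists_isWalk_of_pow_apply_pos {W : Type*} [Fintype W] [DecidableEq W]
    {P : Matrix W W ℝ} (hP : ∀ i j, 0 ≤ P i j) {n : ℕ} {i j : W} (h : 0 < (P ^ n) i j) :
    ∃ p : ℕ → W, p 0 = i ∧ p n = j ∧ IsWalk (fun i j => 0 < P i j) n p := by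
  induction n generalizing j with
  | zero =>
    obtain rfl : i = j := by
      by_contra hij
      simp [hij] at h
    exact ⟨fun _ => i, rfl, rfl, fun k hk => absurd hk (Nat.not_lt_zero k)⟩
  | succ n ih =>
    rw [pow_succ, Matrix.mul_apply, sum_pos_iff_of_nonneg
      fun l _ => mul_nonneg (Matrix.pow_apply_nonneg hP n i l) (hP l j)] at h
    obtain ⟨l, -, hl⟩ := h
    obtain ⟨hil, hlj⟩ := (pos_and_pos_or_neg_and_neg_of_mul_pos hl).resolve_right
      fun h => (Matrix.pow_apply_nonneg hP n i l).not_gt h.1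
    obtain ⟨p, hp0, hpn, hp⟩ := ih hil
    exact ⟨walkAppend n p (edgeWalk l j), by simp [hp0], walkAppend_add (by simp [edgeWalk, hpn]),
      hp.append (isWalk_edgeWalk hlj) (by simp [edgeWalk, hpn])⟩

lemma AddSubgroup.exists_two_le_le_zmultiples_of_ne_top {K : AddSubgroup ℤ} (hK : K ≠ ⊤) :
    ∃ N : ℤ, 2 ≤ N ∧ K ≤ zmultiples N := by
  obtain ⟨a, rfl⟩ := Int.subgroup_cyclic K
  rw [← zmultiples_eq_closure, ← Int.zmultiples_natAbs] at hK ⊢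
  have ha : a.natAbs ≠ 1 := fun h => hK (by simp [h])
  refine ⟨a.natAbs.minFac, by exact_mod_cast (Nat.minFac_prime ha).two_le, ?_⟩
  exact zmultiples_le_of_mem <|
    Int.mem_zmultiples_iff.2 (Int.natCast_dvd_natCast.2 a.natAbs.minFac_dvd)

def subSndMul (b : ℤ) : ℤ × ℤ →+ ℤ :=
  AddMonoidHom.mk' (fun v => v.1 - v.2 * b) fun v w => by simp only [Prod.fst_add, Prod.snd_add]; ring

@[simp]
lemma subSndMul_apply (b : ℤ) (v : ℤ × ℤ) : subSndMul b v = v.1 - v.2 * b := rfl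

lemma AddSubgroup.ne_top_iff_exists_le_comap_subSndMul {H : AddSubgroup (ℤ × ℤ)}
    (hH : H.map (AddMonoidHom.snd ℤ ℤ) = ⊤) :
    H ≠ ⊤ ↔ ∃ N : ℤ, 2 ≤ N ∧ ∃ b, H ≤ (zmultiples N).comap (subSndMul b) := by
  constructor
  · intro hne
    obtain ⟨x, hx, hx1 : x.2 = 1⟩ := hH ▸ mem_top (1 : ℤ)
    have hdecomp (v : ℤ × ℤ) : v = (subSndMul x.1 v, 0) + v.2 • x := by
      ext <;> simp [hx1]
    have hK : H.comap (AddMonoidHom.inl ℤ ℤ) ≠ ⊤ := fun htop => hne <| eq_top_iff.2 fun v _ => by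
      rw [hdecomp v]
      exact add_mem (htop ▸ mem_top _ : _ ∈ H.comap _) (zsmul_mem hx _)
    obtain ⟨N, hN, hKN⟩ := exists_two_le_le_zmultiples_of_ne_top hK
    refine ⟨N, hN, x.1, fun v hv => hKN ?_⟩
    have : AddMonoidHom.inl ℤ ℤ (subSndMul x.1 v) = v - v.2 • x := by
      rw [AddMonoidHom.inl_apply, eq_sub_iff_add_eq, ← hdecomp]
    exact mem_comap.2 (this ▸ sub_mem hv (zsmul_mem hx v.2))
  · rintro ⟨N, hN, b, hle⟩ htop
    have h10 : ((1 : ℤ), (0 : ℤ)) ∈ (zmultiples N).comap (subSndMul b) := hle (htop ▸ mem_top _)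
    simp only [mem_comap, subSndMul_apply, Int.mem_zmultiples_iff] at h10
    have := Int.le_of_dvd one_pos (by simpa using h10)
    omega

theorem statement14_general {W : Type*} [Fintype W] [DecidableEq W] (P : Matrix W W ℝ)
    (hnn : ∀ i j, 0 ≤ P i j)
    (hirr : ∀ i j, ∃ n : ℕ, 1 ≤ n ∧ 0 < (P ^ n) i j)
    (haper : AddSubgroup.closure {L : ℤ | ∃ (n : ℕ) (p : ℕ → W), 1 ≤ n ∧
        (∀ k < n, 0 < P (p k) (p (k + 1))) ∧ p n = p 0 ∧ L = n} = ⊤)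
    (g : W → ℤ) :
    (¬ (AddSubgroup.closure {v : ℤ × ℤ | ∃ (n : ℕ) (p : ℕ → W), 1 ≤ n ∧
        (∀ k < n, 0 < P (p k) (p (k + 1))) ∧ p n = p 0 ∧
        v = (∑ k ∈ Finset.range n, g (p (k + 1)), (n : ℤ))} = ⊤)) ↔
    ∃ (N : ℤ), 2 ≤ N ∧ ∃ (b : ℤ) (γ : W → ℤ),
      ∀ i j, 0 < P i j → γ j ≡ γ i + g j - b [ZMOD N] := by
  have hconn (i j : W) : ∃ n p, p 0 = i ∧ p n = j ∧ IsWalk (fun i j => 0 < P i j) n p := by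
    obtain ⟨n, -, hn⟩ := hirr i j
    exact ⟨n, Matrix.exists_isWalk_of_pow_apply_pos hnn hn⟩
  refine (AddSubgroup.ne_top_iff_exists_le_comap_subSndMul ?_).trans ?_
  · rw [eq_top_iff, ← haper, AddSubgroup.closure_le]
    rintro _ ⟨n, p, hn, hp, hc, rfl⟩
    exact ⟨_, AddSubgroup.subset_closure ⟨n, p, hn, hp, hc, rfl⟩, rfl⟩
  refine exists_congr fun N => and_congr_right fun _ => exists_congr fun b => ?_
  simp_rw [add_sub_assoc]
  rw [exists_potential_iff (f := fun _ j => g j - b) hconn, AddSubgroup.closure_le]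
  have hsum (n : ℕ) (p : ℕ → W) :
      (∑ k ∈ range n, g (p (k + 1))) - n * b = walkSum (fun _ j => g j - b) n p := by
    simp [walkSum, sum_sub_distrib]
  constructor
  · rintro h n p hp hc
    rcases n.eq_zero_or_pos with rfl | hn
    · simp [walkSum]
    · simpa [hsum, Int.mem_zmultiples_iff] using h ⟨n, p, hn, hp, hc, rfl⟩
  · rintro h _ ⟨n, p, -, hp, hc, rfl⟩
    simpa [hsum, Int.mem_zmultiples_iff] using h n p hp hc

/-- The generation condition '{(g(Q), ℓ(Q)) : Q closed path} generates ℤ²' fails iff there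
exist `N ≥ 2`, `b` and integers `γ_i` with `γ_j ≡ γ_i + g(j) − b (mod N)` whenever
`P_{ij} > 0`. -/
theorem statement14 {W : Type*} [Fintype W] [DecidableEq W] (P : Matrix W W ℝ)
    (hnn : ∀ i j, 0 ≤ P i j) (hrow : ∀ i, ∑ j, P i j = 1)
    (hirr : ∀ i j, ∃ n : ℕ, 1 ≤ n ∧ 0 < (P ^ n) i j)
    (haper : AddSubgroup.closure {L : ℤ | ∃ (n : ℕ) (p : ℕ → W), 1 ≤ n ∧
        (∀ k < n, 0 < P (p k) (p (k + 1))) ∧ p n = p 0 ∧ L = n} = ⊤)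
    (g : W → ℤ) :
    (¬ (AddSubgroup.closure {v : ℤ × ℤ | ∃ (n : ℕ) (p : ℕ → W), 1 ≤ n ∧
        (∀ k < n, 0 < P (p k) (p (k + 1))) ∧ p n = p 0 ∧
        v = (∑ k ∈ Finset.range n, g (p (k + 1)), (n : ℤ))} = ⊤)) ↔
    ∃ (N : ℤ), 2 ≤ N ∧ ∃ (b : ℤ) (γ : W → ℤ),
      ∀ i j, 0 < P i j → γ j ≡ γ i + g j - b [ZMOD N] :=
  statement14_general P hnn hirr haper g
end

section
/- Degeneracy characterization: for an irreducible aperiodic finite-state Markov chain with g : W → ℤ, the following are equivalent: (a) there is an integer b with g(Q) = b·ℓ(Q) for every closed path Q; (b) there exist an integer b and integers γ_i (i ∈ W) with γ_j = γ_i + g(j) − b whenever P_{ij} > 0; (c) there is an integer b and constant C so that |S_n − b·n| ≤ C deterministically for all n, where S_n = ∑_{k=1}^n g(W_k). -/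
section Aux

variable {W : Type*} [Fintype W] [DecidableEq W]

private lemma pow_entry_nonneg (P : Matrix W W ℝ) (hnn : ∀ i j, 0 ≤ P i j) :
    ∀ (n : ℕ) (i j : W), 0 ≤ (P ^ n) i j := by
  intro n
  induction n with
  | zero =>
    intro i j
    rw [pow_zero]
    by_cases h : i = j <;> simp [Matrix.one_apply, h]
  | succ n ih =>
    intro i j
    rw [pow_succ, Matrix.mul_apply]
    exact Finset.sum_nonneg fun m _ => mul_nonneg (ih i m) (hnn m j)

private lemma exists_path (P : Matrix W W ℝ) (hnn : ∀ i j, 0 ≤ P i j) :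
    ∀ (n : ℕ) (i j : W), 0 < (P ^ n) i j →
      ∃ p : ℕ → W, p 0 = i ∧ p n = j ∧ ∀ k < n, 0 < P (p k) (p (k + 1)) := by
  intro n
  induction n with
  | zero =>
    intro i j h
    by_cases hij : i = j
    · exact ⟨fun _ => i, rfl, hij, fun k hk => absurd hk (Nat.not_lt_zero k)⟩
    · rw [pow_zero, Matrix.one_apply, if_neg hij] at h
      exact absurd h (lt_irrefl 0)
  | succ n ih =>
    intro i j h
    rw [pow_succ, Matrix.mul_apply] at h
    have h0 : ∑ m : W, (0 : ℝ) < ∑ m : W, (P ^ n) i m * P m j := by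
      simpa using h
    obtain ⟨m, -, hm⟩ := Finset.exists_lt_of_sum_lt h0
    have h1 : 0 < (P ^ n) i m := by
      rcases mul_pos_iff.mp hm with ⟨h1, _⟩ | ⟨h1, h2⟩
      · exact h1
      · exact absurd h2 (not_lt.mpr (hnn m j))
    have h2 : 0 < P m j := by
      rcases mul_pos_iff.mp hm with ⟨_, h2⟩ | ⟨h1, _⟩
      · exact h2
      · exact absurd h1 (not_lt.mpr (pow_entry_nonneg P hnn n i m))
    obtain ⟨p, hp0, hpn, hpstep⟩ := ih i m h1
    refine ⟨fun k => if k ≤ n then p k else j, by simpa using hp0, by simp, ?_⟩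
    intro k hk
    rcases lt_or_ge k n with hkn | hkn
    · simp only [if_pos hkn.le, if_pos (Nat.succ_le_of_lt hkn)]
      exact hpstep k hkn
    · have hkeq : k = n := by omega
      subst hkeq
      simp only [le_refl, if_pos, if_neg (by omega : ¬ k + 1 ≤ k)]
      rw [hpn]
      exact h2

private lemma concat_path (P : Matrix W W ℝ) (g : W → ℤ) (p q : ℕ → W) (n m : ℕ)
    (hpq : p n = q 0)
    (hp : ∀ k < n, 0 < P (p k) (p (k + 1))) (hq : ∀ k < m, 0 < P (q k) (q (k + 1))) :
    ∃ r : ℕ → W, r 0 = p 0 ∧ r (n + m) = q m ∧ (∀ k < n + m, 0 < P (r k) (r (k + 1))) ∧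
      ∑ k ∈ Finset.range (n + m), g (r (k + 1)) =
        ∑ k ∈ Finset.range n, g (p (k + 1)) + ∑ k ∈ Finset.range m, g (q (k + 1)) := by
  refine ⟨fun k => if k ≤ n then p k else q (k - n), ?_, ?_, ?_, ?_⟩
  · simp
  · rcases Nat.eq_zero_or_pos m with hm | hm
    · subst hm; simpa using hpq
    · simp only [if_neg (by omega : ¬ n + m ≤ n)]
      congr 1
      omega
  · intro k hk
    show 0 < P (if k ≤ n then p k else q (k - n))
        (if k + 1 ≤ n then p (k + 1) else q (k + 1 - n))
    rcases lt_or_ge k n with hkn | hkn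
    · rw [if_pos hkn.le, if_pos (Nat.succ_le_of_lt hkn)]
      exact hp k hkn
    · have hr1 : (if k ≤ n then p k else q (k - n)) = q (k - n) := by
        rcases eq_or_lt_of_le hkn with he | hl
        · rw [if_pos he.ge, ← he, Nat.sub_self, ← hpq]
        · rw [if_neg (by omega)]
      have hr2 : (if k + 1 ≤ n then p (k + 1) else q (k + 1 - n)) = q (k - n + 1) := by
        rw [if_neg (by omega)]
        congr 1
        omega
      rw [hr1, hr2]
      exact hq (k - n) (by omega)
  · rw [Finset.sum_range_add]
    congr 1
    · apply Finset.sum_congr rfl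
      intro k hk
      rw [Finset.mem_range] at hk
      show g (if k + 1 ≤ n then p (k + 1) else q (k + 1 - n)) = g (p (k + 1))
      rw [if_pos (Nat.succ_le_of_lt hk)]
    · apply Finset.sum_congr rfl
      intro k hk
      show g (if n + k + 1 ≤ n then p (n + k + 1) else q (n + k + 1 - n)) = g (q (k + 1))
      rw [if_neg (by omega)]
      congr 2
      omega

private lemma sum_Icc_one (f : ℕ → ℤ) (n : ℕ) :
    ∑ k ∈ Finset.Icc 1 n, f k = ∑ k ∈ Finset.range n, f (k + 1) := by
  induction n with
  | zero => simp
  | succ n ih =>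
    rw [Finset.sum_Icc_succ_top (by omega), ih, Finset.sum_range_succ]

end Aux

/-- Degeneracy characterization: for an irreducible aperiodic finite-state chain,
(a) `g(Q) = b ℓ(Q)` for all closed paths `Q`, for some integer `b`;
(b) there are integers `γ_i` with `γ_j = γ_i + g(j) − b` whenever `P_{ij} > 0`;
(c) `|S_n − b n| ≤ C` deterministically along every trajectory;
are all equivalent. -/
theorem statement15 {W : Type*} [Fintype W] [DecidableEq W] (P : Matrix W W ℝ)
    (hnn : ∀ i j, 0 ≤ P i j) (hrow : ∀ i, ∑ j, P i j = 1)
    (hirr : ∀ i j, ∃ n : ℕ, 1 ≤ n ∧ 0 < (P ^ n) i j)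
    (haper : AddSubgroup.closure {L : ℤ | ∃ (n : ℕ) (p : ℕ → W), 1 ≤ n ∧
        (∀ k < n, 0 < P (p k) (p (k + 1))) ∧ p n = p 0 ∧ L = n} = ⊤)
    (g : W → ℤ) :
    ((∃ b : ℤ, ∀ (n : ℕ) (p : ℕ → W), 1 ≤ n →
        (∀ k < n, 0 < P (p k) (p (k + 1))) → p n = p 0 →
        ∑ k ∈ Finset.range n, g (p (k + 1)) = b * n) ↔
      (∃ (b : ℤ) (γ : W → ℤ), ∀ i j, 0 < P i j → γ j = γ i + g j - b)) ∧
    ((∃ b : ℤ, ∀ (n : ℕ) (p : ℕ → W), 1 ≤ n →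
        (∀ k < n, 0 < P (p k) (p (k + 1))) → p n = p 0 →
        ∑ k ∈ Finset.range n, g (p (k + 1)) = b * n) ↔
      (∃ (b C : ℤ), ∀ (w : ℕ → W), (∀ k, 1 ≤ k → 0 < P (w k) (w (k + 1))) →
        ∀ n : ℕ, |(∑ k ∈ Finset.Icc 1 n, g (w k)) - b * n| ≤ C)) := by
  -- (a) → (b)
  have hab : (∃ b : ℤ, ∀ (n : ℕ) (p : ℕ → W), 1 ≤ n →
        (∀ k < n, 0 < P (p k) (p (k + 1))) → p n = p 0 →
        ∑ k ∈ Finset.range n, g (p (k + 1)) = b * n) →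
      (∃ (b : ℤ) (γ : W → ℤ), ∀ i j, 0 < P i j → γ j = γ i + g j - b) := by
    rintro ⟨b, hA⟩
    rcases isEmpty_or_nonempty W with hW | hW
    · exact ⟨b, fun i => 0, fun i => hW.elim i⟩
    obtain ⟨i0⟩ := hW
    have hpath : ∀ j : W, ∃ (n : ℕ) (p : ℕ → W), p 0 = i0 ∧ p n = j ∧
        ∀ k < n, 0 < P (p k) (p (k + 1)) := by
      intro j
      obtain ⟨n, -, hn⟩ := hirr i0 j
      obtain ⟨p, h1, h2, h3⟩ := exists_path P hnn n i0 j hn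
      exact ⟨n, p, h1, h2, h3⟩
    choose N pth h0 hend hstep using hpath
    set γ : W → ℤ := fun j => (∑ k ∈ Finset.range (N j), g (pth j (k + 1))) - b * N j with hγ
    -- well-definedness
    have wd : ∀ (j : W) (n : ℕ) (p : ℕ → W), p 0 = i0 → p n = j →
        (∀ k < n, 0 < P (p k) (p (k + 1))) →
        (∑ k ∈ Finset.range n, g (p (k + 1))) - b * n = γ j := by
      intro j n p hp0 hpn hps
      obtain ⟨m, hm1, hm⟩ := hirr j i0
      obtain ⟨q, hq0, hqm, hqs⟩ := exists_path P hnn m j i0 hm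
      obtain ⟨r1, hr10, hr1e, hr1s, hr1sum⟩ :=
        concat_path P g p q n m (by rw [hpn, hq0]) hps hqs
      obtain ⟨r2, hr20, hr2e, hr2s, hr2sum⟩ :=
        concat_path P g (pth j) q (N j) m (by rw [hend, hq0]) (hstep j) hqs
      have e1 := hA (n + m) r1 (by omega) hr1s (by rw [hr1e, hr10, hqm, hp0])
      have e2 := hA (N j + m) r2 (by omega) hr2s (by rw [hr2e, hr20, hqm, h0])
      rw [hr1sum] at e1
      rw [hr2sum] at e2
      rw [hγ]
      push_cast at e1 e2 ⊢
      linarith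
    refine ⟨b, γ, fun i j hij => ?_⟩
    -- extend path to i by one step
    obtain ⟨r, hr0, hre, hrs, hrsum⟩ :=
      concat_path P g (pth i) (fun k => if k = 0 then i else j) (N i) 1
        (by simp [hend]) (hstep i)
        (by intro k hk; interval_cases k; simpa using hij)
    have := wd j (N i + 1) r (by rw [hr0, h0]) (by simpa using hre) hrs
    rw [hrsum] at this
    have hγi : γ i = (∑ k ∈ Finset.range (N i), g (pth i (k + 1))) - b * N i := rfl
    simp only [Finset.range_one, Finset.sum_singleton] at this
    rw [← this, hγi]
    push_cast
    ring
  -- (b) → (a)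
  have hba : (∃ (b : ℤ) (γ : W → ℤ), ∀ i j, 0 < P i j → γ j = γ i + g j - b) →
      (∃ b : ℤ, ∀ (n : ℕ) (p : ℕ → W), 1 ≤ n →
        (∀ k < n, 0 < P (p k) (p (k + 1))) → p n = p 0 →
        ∑ k ∈ Finset.range n, g (p (k + 1)) = b * n) := by
    rintro ⟨b, γ, h⟩
    refine ⟨b, fun n p hn hs hc => ?_⟩
    have key : ∀ k ∈ Finset.range n, g (p (k + 1)) =
        (γ (p (k + 1)) - γ (p k)) + b := by
      intro k hk
      rw [Finset.mem_range] at hk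
      have := h (p k) (p (k + 1)) (hs k hk)
      linarith
    rw [Finset.sum_congr rfl key, Finset.sum_add_distrib,
      Finset.sum_range_sub (fun k => γ (p k)), hc]
    simp [mul_comm]
  -- (b) → (c)
  have hbc : (∃ (b : ℤ) (γ : W → ℤ), ∀ i j, 0 < P i j → γ j = γ i + g j - b) →
      (∃ (b C : ℤ), ∀ (w : ℕ → W), (∀ k, 1 ≤ k → 0 < P (w k) (w (k + 1))) →
        ∀ n : ℕ, |(∑ k ∈ Finset.Icc 1 n, g (w k)) - b * n| ≤ C) := by
    rintro ⟨b, γ, h⟩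
    rcases isEmpty_or_nonempty W with hW | hW
    · exact ⟨b, 0, fun w => (hW.elim (w 0))⟩
    refine ⟨b, (∑ i, |g i|) + 2 * (∑ i, |γ i|) + |b|, fun w hw n => ?_⟩
    have hg : ∀ i : W, |g i| ≤ ∑ i, |g i| := fun i =>
      Finset.single_le_sum (fun i _ => abs_nonneg (g i)) (Finset.mem_univ i)
    have hγb : ∀ i : W, |γ i| ≤ ∑ i, |γ i| := fun i =>
      Finset.single_le_sum (fun i _ => abs_nonneg (γ i)) (Finset.mem_univ i)
    rw [sum_Icc_one]
    rcases n with _ | m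
    · simp only [Finset.range_zero, Finset.sum_empty, Nat.cast_zero, mul_zero, sub_zero,
        abs_zero]
      positivity
    · rw [Finset.sum_range_succ']
      have key : ∀ k ∈ Finset.range m, g (w (k + 1 + 1)) =
          (γ (w (k + 1 + 1)) - γ (w (k + 1))) + b := by
        intro k hk
        have := h (w (k + 1)) (w (k + 1 + 1)) (hw (k + 1) (by omega))
        linarith
      rw [Finset.sum_congr rfl key, Finset.sum_add_distrib,
        Finset.sum_range_sub (fun k => γ (w (k + 1))), Finset.sum_const,
        Finset.card_range, nsmul_eq_mul]
      have l1 := le_abs_self (γ (w (m + 1)))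
      have l1' := neg_abs_le (γ (w (m + 1)))
      have l2 := le_abs_self (γ (w 1))
      have l2' := neg_abs_le (γ (w 1))
      have l3 := le_abs_self (g (w 1))
      have l3' := neg_abs_le (g (w 1))
      have l4 := le_abs_self b
      have l4' := neg_abs_le b
      have b1 := hγb (w (m + 1))
      have b2 := hγb (w 1)
      have b3 := hg (w 1)
      rw [abs_le]
      push_cast
      constructor <;> nlinarith
  -- (c) → (a)
  have hca : (∃ (b C : ℤ), ∀ (w : ℕ → W), (∀ k, 1 ≤ k → 0 < P (w k) (w (k + 1))) →
        ∀ n : ℕ, |(∑ k ∈ Finset.Icc 1 n, g (w k)) - b * n| ≤ C) →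
      (∃ b : ℤ, ∀ (n : ℕ) (p : ℕ → W), 1 ≤ n →
        (∀ k < n, 0 < P (p k) (p (k + 1))) → p n = p 0 →
        ∑ k ∈ Finset.range n, g (p (k + 1)) = b * n) := by
    rintro ⟨b, C, hC⟩
    refine ⟨b, fun n p hn hs hc => ?_⟩
    set w : ℕ → W := fun k => p ((k - 1) % n) with hwdef
    have hmod : ∀ k : ℕ, 1 ≤ k → k % n = ((k - 1) % n + 1) % n := by
      intro k hk
      conv_lhs => rw [show k = (k - 1) + 1 by omega]
      exact ((Nat.mod_modEq (k - 1) n).add_right 1).symm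
    have hwstep : ∀ k, 1 ≤ k → 0 < P (w k) (w (k + 1)) := by
      intro k hk
      show 0 < P (p ((k - 1) % n)) (p ((k + 1 - 1) % n))
      rw [show k + 1 - 1 = k by omega]
      have hj : (k - 1) % n < n := Nat.mod_lt _ (by omega)
      rcases Nat.lt_or_ge ((k - 1) % n + 1) n with hl | hge
      · have hk0 : k % n = (k - 1) % n + 1 := by
          rw [hmod k hk]; exact Nat.mod_eq_of_lt hl
        rw [hk0]
        exact hs _ hj
      · have he : (k - 1) % n + 1 = n := by omega
        have hk0 : k % n = 0 := by rw [hmod k hk, he, Nat.mod_self]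
        have hstep := hs _ hj
        rw [he, hc] at hstep
        rw [hk0]
        exact hstep
    have hwval : ∀ i : ℕ, w (i + 1) = p (i % n) := by
      intro i
      show p ((i + 1 - 1) % n) = p (i % n)
      congr 1
    set G : ℤ := ∑ k ∈ Finset.range n, g (p (k + 1)) with hG
    have hG' : ∑ j ∈ Finset.range n, g (p j) = G := by
      have h1 : ∑ k ∈ Finset.range (n + 1), g (p k) =
          ∑ k ∈ Finset.range n, g (p (k + 1)) + g (p 0) := Finset.sum_range_succ' _ n
      have h2 : ∑ k ∈ Finset.range (n + 1), g (p k) =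
          ∑ k ∈ Finset.range n, g (p k) + g (p n) := Finset.sum_range_succ _ n
      rw [hc] at h2
      rw [hG]
      linarith
    have hsum : ∀ m : ℕ, ∑ i ∈ Finset.range (m * n), g (w (i + 1)) = m * G := by
      intro m
      induction m with
      | zero => simp
      | succ t ih =>
        rw [show (t + 1) * n = t * n + n by ring, Finset.sum_range_add, ih]
        have hterm : ∀ i ∈ Finset.range n, g (w (t * n + i + 1)) = g (p i) := by
          intro i hi
          rw [Finset.mem_range] at hi
          rw [hwval (t * n + i)]
          congr 2
          rw [Nat.add_comm, Nat.add_mul_mod_self_right]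
          exact Nat.mod_eq_of_lt hi
        rw [Finset.sum_congr rfl hterm, hG']
        push_cast
        ring
    have hb2 : ∀ m : ℕ, |(m : ℤ) * (G - b * n)| ≤ C := by
      intro m
      have := hC w hwstep (m * n)
      rw [sum_Icc_one, hsum m] at this
      have heq : (m : ℤ) * (G - b * n) = (m : ℤ) * G - b * ((m * n : ℕ) : ℤ) := by
        push_cast; ring
      rw [heq]
      exact this
    by_contra hne
    have hd : 1 ≤ |G - b * n| := Int.one_le_abs (sub_ne_zero.mpr hne)
    have hC0 : 0 ≤ C := le_trans (abs_nonneg _) (hb2 0)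
    have hbig := hb2 (C.natAbs + 1)
    rw [abs_mul, Nat.abs_cast] at hbig
    have hCle : C ≤ (C.natAbs : ℤ) := Int.le_natAbs
    have hmul : ((C.natAbs + 1 : ℕ) : ℤ) * 1 ≤ ((C.natAbs + 1 : ℕ) : ℤ) * |G - b * n| := by
      apply mul_le_mul_of_nonneg_left hd
      positivity
    push_cast at hmul hbig
    linarith [le_abs_self C]
  exact ⟨⟨hab, hba⟩, ⟨fun ha => hbc (hab ha), hca⟩⟩
end

section
/- For q ≥ 3, the degeneracy equation 1 + θ_{AA} − θ_{AB} − θ_{BA} + θ_{BB} = 0 is impossible for any pair of distinct words A, B of the same length ℓ; equivalently, the asymptotic variance σ² = 2q^{-ℓ}(1 + θ_{AA} − θ_{AB} − θ_{BA} + θ_{BB}) is strictly positive whenever the alphabet has at least 3 letters. -/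
lemma geomS_lt_half (q : ℕ) (hq : 3 ≤ q) (ℓ : ℕ) :
    (∑ k ∈ Finset.Ico 1 ℓ, (q : ℝ) ^ ((k : ℤ) - ℓ)) < 1/2 := by
  have hq' : (3 : ℝ) ≤ (q : ℝ) := by exact_mod_cast hq
  have hq0 : (0 : ℝ) < (q : ℝ) := by linarith
  induction ℓ with
  | zero => simp
  | succ n ih =>
    rcases Nat.eq_zero_or_pos n with hn | hn
    · subst hn; simp
    have hsplit : (∑ k ∈ Finset.Ico 1 (n+1), (q : ℝ) ^ ((k : ℤ) - (n+1)))
        = (∑ k ∈ Finset.Ico 1 n, (q : ℝ) ^ ((k : ℤ) - (n+1))) + (q : ℝ) ^ ((n : ℤ) - (n+1)) := by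
      rw [Finset.sum_Ico_succ_top hn]
    have hfac : ∀ k : ℕ, (q : ℝ) ^ ((k : ℤ) - (n+1)) = (q : ℝ)⁻¹ * (q : ℝ) ^ ((k : ℤ) - n) := by
      intro k
      rw [← zpow_neg_one, ← zpow_add₀ (ne_of_gt hq0)]
      ring_nf
    have h2 : (∑ k ∈ Finset.Ico 1 n, (q : ℝ) ^ ((k : ℤ) - (n+1)))
        = (q : ℝ)⁻¹ * ∑ k ∈ Finset.Ico 1 n, (q : ℝ) ^ ((k : ℤ) - n) := by
      rw [Finset.mul_sum]; exact Finset.sum_congr rfl fun k _ => hfac k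
    have h3 : (q : ℝ) ^ ((n : ℤ) - (n+1)) = (q : ℝ)⁻¹ := by
      have : ((n : ℤ) - (n+1)) = -1 := by ring
      rw [this, zpow_neg_one]
    push_cast
    rw [hsplit, h2, h3]
    have hinv : (q : ℝ)⁻¹ ≤ 1/3 := by
      rw [inv_le_comm₀ hq0 (by norm_num)]; linarith
    have hSnn : (0 : ℝ) ≤ ∑ k ∈ Finset.Ico 1 n, (q : ℝ) ^ ((k : ℤ) - n) :=
      Finset.sum_nonneg fun k _ => le_of_lt (zpow_pos hq0 _)
    have hinv0 : (0 : ℝ) < (q : ℝ)⁻¹ := inv_pos.mpr hq0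
    nlinarith [ih]

lemma theta_nonneg {A : Type*} (q ℓ : ℕ) (U V : Fin ℓ → A) (hq : 3 ≤ q) :
    0 ≤ theta q ℓ U V := by
  have hq0 : (0 : ℝ) < (q : ℝ) := by
    have : (3 : ℝ) ≤ (q : ℝ) := by exact_mod_cast hq
    linarith
  refine Finset.sum_nonneg fun k _ => ?_
  split_ifs
  · exact le_of_lt (zpow_pos hq0 _)
  · exact le_refl _

open Classical in
lemma theta_le {A : Type*} (q ℓ : ℕ) (U V : Fin ℓ → A) (hq : 3 ≤ q) :
    theta q ℓ U V ≤ ∑ k ∈ Finset.Ico 1 ℓ, (q : ℝ) ^ ((k : ℤ) - ℓ) := by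
  have hq0 : (0 : ℝ) < (q : ℝ) := by
    have : (3 : ℝ) ≤ (q : ℝ) := by exact_mod_cast hq
    linarith
  refine Finset.sum_le_sum fun k _ => ?_
  split_ifs
  · exact le_refl _
  · exact le_of_lt (zpow_pos hq0 _)

/-- For `q ≥ 3` the degeneracy equation `1 + θ_AA − θ_AB − θ_BA + θ_BB = 0` is impossible:
equivalently, the asymptotic variance `σ² = 2 q^{-ℓ}(1 + θ_AA − θ_AB − θ_BA + θ_BB)` is
strictly positive for any pair of distinct words of the same length. -/
theorem statement16 {A : Type*} [Fintype A] (q ℓ : ℕ) (hq : 3 ≤ q)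
    (hcard : Fintype.card A = q) (U V : Fin ℓ → A) (hUV : U ≠ V) :
    0 < 2 * (q : ℝ) ^ (-(ℓ : ℤ)) *
      (1 + theta q ℓ U U - theta q ℓ U V - theta q ℓ V U + theta q ℓ V V) := by
  have hq' : (3 : ℝ) ≤ (q : ℝ) := by exact_mod_cast hq
  have hq0 : (0 : ℝ) < (q : ℝ) := by linarith
  have h1 := theta_nonneg q ℓ U U hq
  have h2 := theta_nonneg q ℓ V V hq
  have h3 := (theta_le q ℓ U V hq).trans_lt (geomS_lt_half q hq ℓ)
  have h4 := (theta_le q ℓ V U hq).trans_lt (geomS_lt_half q hq ℓ)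
  have hpow : (0 : ℝ) < (q : ℝ) ^ (-(ℓ : ℤ)) := zpow_pos hq0 _
  nlinarith
end

section
/- Characterization of fair degenerate words over a binary alphabet: if A ≠ B are words of length ℓ ≥ 2 in {H,T} with 1 + θ_{AA} − θ_{AB} − θ_{BA} + θ_{BB} = 0, then up to swapping A with B and swapping H with T, one has A = H T^{ℓ−1} and B = T^{ℓ−1} H. -/
/-!
Scale by `2 ^ ℓ`: `θ_{UV} = c(U,V) / 2 ^ ℓ`, where the correlation `c(U,V)` is the binary number
whose `k`-th bit says that `U` overlaps `V` by `k`, so that `c(U,V) ≤ 2 ^ ℓ - 2` and the hypothesis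
reads `c(A,B) + c(B,A) = 2 ^ ℓ + c(A,A) + c(B,B)`. If neither word overlaps the other by `ℓ - 1`,
the left side is at most `2 ^ ℓ - 4`. If `A` overlaps `B` by `ℓ - 1`, then an overlap of `B` with
`A` by `k + 1` composes with it to self-overlaps of `A` and of `B` by `k`, whence
`c(B,A) ≤ 2 + c(A,A) + c(B,B)`. Equality is then forced: `A` overlaps `B` by every `k` and `B`
overlaps `A` by `1`, which makes `A = x y^{ℓ-1}` and `B = y^{ℓ-1} x`.
-/

open Finset

section BinaryNumbers

variable (p : ℕ → Prop) [DecidablePred p]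

lemma sum_Ico_one_two_pow_add_two {n : ℕ} (hn : 1 ≤ n) : ∑ k ∈ Ico 1 n, 2 ^ k + 2 = 2 ^ n := by
  induction n, hn using Nat.le_induction with
  | base => simp
  | succ n hn ih => rw [sum_Ico_succ_top hn, pow_succ]; omega

lemma sum_Ico_ite_two_pow_add_two_le {n : ℕ} (hn : 1 ≤ n) :
    ∑ k ∈ Ico 1 n, (if p k then 2 ^ k else 0) + 2 ≤ 2 ^ n := by
  rw [← sum_Ico_one_two_pow_add_two hn]
  gcongr with k
  split_ifs <;> simp

lemma forall_of_sum_Ico_ite_two_pow_add_two_eq {n : ℕ}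
    (h : ∑ k ∈ Ico 1 n, (if p k then 2 ^ k else 0) + 2 = 2 ^ n) : ∀ k ∈ Ico 1 n, p k := by
  obtain _ | n := n
  · simp
  have hle : ∀ k ∈ Ico 1 (n + 1), (if p k then 2 ^ k else 0) ≤ 2 ^ k := fun k _ => by
    split_ifs <;> simp
  have hsum := sum_Ico_one_two_pow_add_two (n := n + 1) (by omega)
  have heq := (sum_eq_sum_iff_of_le hle).1 (by omega)
  intro k hk
  by_contra hpk
  have h0 : 0 = 2 ^ k := by simpa [hpk] using heq k hk
  exact pow_ne_zero k two_ne_zero h0.symm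

end BinaryNumbers

section Words

variable {α : Type*} {ℓ k m t : ℕ} {U V W : Fin ℓ → α}

lemma overlapAt_iff_s17 (hk : k ≤ ℓ) :
    OverlapAt ℓ k U V ↔ ∀ i j : Fin ℓ, (i : ℕ) + k = j + ℓ → U i = V j := by
  constructor
  · rintro h ⟨i, hi⟩ ⟨j, hj⟩ (hij : i + k = j + ℓ)
    obtain rfl : i = ℓ - k + j := by omega
    exact h j (by omega) hi
  · intro h i hi hlt
    exact h _ _ (by simp; omega)

lemma OverlapAt.trans (h₁ : OverlapAt ℓ m W U) (h₂ : OverlapAt ℓ k U V) (hm : m ≤ ℓ)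
    (hk : k ≤ ℓ) (ht : m + k = ℓ + t) : OverlapAt ℓ t W V := by
  rw [overlapAt_iff_s17 hm] at h₁
  rw [overlapAt_iff_s17 hk] at h₂
  rw [overlapAt_iff_s17 (by omega)]
  intro r j hrj
  exact (h₁ r ⟨j + ℓ - k, by omega⟩ (by simp; omega)).trans (h₂ _ j (by simp; omega))


open Classical in
noncomputable def correlation (ℓ : ℕ) (U V : Fin ℓ → α) : ℕ :=
  ∑ k ∈ Ico 1 ℓ, if OverlapAt ℓ k U V then 2 ^ k else 0

lemma theta_two_eq (U V : Fin ℓ → α) : theta 2 ℓ U V = correlation ℓ U V / 2 ^ ℓ := by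
  unfold theta correlation
  push_cast [sum_div]
  refine sum_congr rfl fun k _ => ?_
  split_ifs
  · rw [zpow_sub₀ two_ne_zero, zpow_natCast, zpow_natCast]
  · simp

lemma correlation_add_two_le (hℓ : 1 ≤ ℓ) (U V : Fin ℓ → α) :
    correlation ℓ U V + 2 ≤ 2 ^ ℓ := by
  classical
  exact sum_Ico_ite_two_pow_add_two_le _ hℓ

lemma correlation_add_two_le_of_not_overlapAt_pred (hℓ : 2 ≤ ℓ) {U V : Fin ℓ → α}
    (h : ¬ OverlapAt ℓ (ℓ - 1) U V) : correlation ℓ U V + 2 ≤ 2 ^ (ℓ - 1) := by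
  classical
  obtain ⟨n, rfl⟩ : ∃ n, ℓ = n + 1 := ⟨ℓ - 1, by omega⟩
  rw [Nat.add_sub_cancel] at h ⊢
  unfold correlation
  rw [sum_Ico_succ_top (by omega), if_neg h, add_zero]
  exact sum_Ico_ite_two_pow_add_two_le _ (by omega)

open Classical in
lemma correlation_le_of_overlapAt_pred (hℓ : 2 ≤ ℓ) {A B : Fin ℓ → α}
    (htop : OverlapAt ℓ (ℓ - 1) A B) :
    correlation ℓ B A ≤
      (if OverlapAt ℓ 1 B A then 2 else 0) + (correlation ℓ A A + correlation ℓ B B) := by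
  have hstep : ∀ k ∈ Ico 1 (ℓ - 1), (if OverlapAt ℓ (k + 1) B A then 2 ^ (k + 1) else 0) ≤
      (if OverlapAt ℓ k A A then 2 ^ k else 0) + (if OverlapAt ℓ k B B then 2 ^ k else 0) := by
    intro k hk
    rw [mem_Ico] at hk
    by_cases h : OverlapAt ℓ (k + 1) B A
    · rw [if_pos h, if_pos (htop.trans h (by omega) (by omega) (by omega)),
        if_pos (h.trans htop (by omega) (by omega) (by omega)), pow_succ]
      omega
    · rw [if_neg h]
      exact Nat.zero_le _
  unfold correlation
  rw [sum_eq_sum_Ico_succ_bot (by omega), ← sum_add_distrib, pow_one]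
  gcongr
  calc ∑ k ∈ Ico 2 ℓ, (if OverlapAt ℓ k B A then 2 ^ k else 0)
      = ∑ k ∈ Ico 1 (ℓ - 1), (if OverlapAt ℓ (k + 1) B A then 2 ^ (k + 1) else 0) := by
        rw [sum_Ico_add' (fun k => if OverlapAt ℓ k B A then 2 ^ k else 0),
          Nat.sub_add_cancel (by omega)]
    _ ≤ _ := sum_le_sum hstep
    _ ≤ _ := sum_le_sum_of_subset (Ico_subset_Ico_right (by omega))

lemma correlation_eq_of_theta_eq {A B : Fin ℓ → α}
    (h : 1 + theta 2 ℓ A A - theta 2 ℓ A B - theta 2 ℓ B A + theta 2 ℓ B B = 0) :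
    correlation ℓ A B + correlation ℓ B A =
      2 ^ ℓ + correlation ℓ A A + correlation ℓ B B := by
  simp only [theta_two_eq] at h
  field_simp at h
  exact_mod_cast (by linarith : (correlation ℓ A B + correlation ℓ B A : ℝ) =
    2 ^ ℓ + correlation ℓ A A + correlation ℓ B B)

lemma forall_overlapAt_of_correlation_eq (hℓ : 2 ≤ ℓ) {A B : Fin ℓ → α}
    (htop : OverlapAt ℓ (ℓ - 1) A B)
    (hfair : correlation ℓ A B + correlation ℓ B A =
      2 ^ ℓ + correlation ℓ A A + correlation ℓ B B) :
    (∀ k ∈ Ico 1 ℓ, OverlapAt ℓ k A B) ∧ OverlapAt ℓ 1 B A := by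
  classical
  have hAB := correlation_add_two_le (by omega) A B
  have hBA := correlation_le_of_overlapAt_pred hℓ htop
  constructor
  · apply forall_of_sum_Ico_ite_two_pow_add_two_eq
    change correlation ℓ A B + 2 = 2 ^ ℓ
    split_ifs at hBA <;> omega
  · by_contra h
    rw [if_neg h] at hBA
    omega

lemma eq_ite_of_forall_overlapAt (hℓ : 2 ≤ ℓ) {A B : Fin ℓ → α}
    (hAB : ∀ k ∈ Ico 1 ℓ, OverlapAt ℓ k A B) (hBA : OverlapAt ℓ 1 B A) :
    (∀ i : Fin ℓ, A i = if (i : ℕ) = 0 then A ⟨0, by omega⟩ else A ⟨1, hℓ⟩) ∧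
      ∀ i : Fin ℓ, B i = if (i : ℕ) = ℓ - 1 then A ⟨0, by omega⟩ else A ⟨1, hℓ⟩ := by
  have hshift (i j : Fin ℓ) (h : (i : ℕ) = j + 1) : A i = B j :=
    (overlapAt_iff_s17 (by omega)).1 (hAB (ℓ - 1) (by simp; omega)) i j (by omega)
  have hshift₂ (i j : Fin ℓ) (h : (i : ℕ) = j + 2) : A i = B j :=
    (overlapAt_iff_s17 (by omega)).1 (hAB (ℓ - 2) (by simp; omega)) i j (by omega)
  have hwrap : B ⟨ℓ - 1, by omega⟩ = A ⟨0, by omega⟩ :=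
    (overlapAt_iff_s17 (by omega)).1 hBA _ _ (by simp; omega)
  have hconst : ∀ i : Fin ℓ, (i : ℕ) ≠ 0 → A i = A ⟨1, hℓ⟩ := by
    rintro ⟨i, hi⟩ hi0
    induction i with
    | zero => exact absurd rfl hi0
    | succ d ih =>
      obtain _ | d := d
      · rfl
      rw [hshift₂ ⟨d + 2, hi⟩ ⟨d, by omega⟩ rfl, ← hshift ⟨d + 1, by omega⟩ ⟨d, by omega⟩ rfl]
      exact ih _ (by simp)
  constructor
  · intro i
    split_ifs with h
    · exact congrArg A (Fin.ext h)
    · exact hconst i h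
  · intro i
    split_ifs with h
    · rw [← hwrap]
      exact congrArg B (Fin.ext h)
    · rw [← hshift ⟨i + 1, by omega⟩ i rfl]
      exact hconst _ (by simp)

end Words

lemma eq_decide_of_eq_ite {ℓ : ℕ} {A B : Fin ℓ → Bool} {x y : Bool} (hxy : x ≠ y)
    (hA : ∀ i : Fin ℓ, A i = if (i : ℕ) = 0 then x else y)
    (hB : ∀ i : Fin ℓ, B i = if (i : ℕ) = ℓ - 1 then x else y) :
    (A = (fun i : Fin ℓ => decide ((i : ℕ) ≠ 0)) ∧
        B = (fun i : Fin ℓ => decide ((i : ℕ) ≠ ℓ - 1))) ∨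
      (A = (fun i : Fin ℓ => decide ((i : ℕ) = 0)) ∧
        B = (fun i : Fin ℓ => decide ((i : ℕ) = ℓ - 1))) := by
  obtain rfl : y = !x := by revert hxy; cases x <;> cases y <;> decide
  cases x
  · exact .inl ⟨funext fun i => by simp [hA], funext fun i => by simp [hB]⟩
  · exact .inr ⟨funext fun i => by simp [hA], funext fun i => by simp [hB]⟩

lemma eq_decide_of_correlation_eq {ℓ : ℕ} (hℓ : 2 ≤ ℓ) {A B : Fin ℓ → Bool} (hne : A ≠ B)
    (htop : OverlapAt ℓ (ℓ - 1) A B)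
    (hfair : correlation ℓ A B + correlation ℓ B A =
      2 ^ ℓ + correlation ℓ A A + correlation ℓ B B) :
    (A = (fun i : Fin ℓ => decide ((i : ℕ) ≠ 0)) ∧
        B = (fun i : Fin ℓ => decide ((i : ℕ) ≠ ℓ - 1))) ∨
      (A = (fun i : Fin ℓ => decide ((i : ℕ) = 0)) ∧
        B = (fun i : Fin ℓ => decide ((i : ℕ) = ℓ - 1))) := by
  obtain ⟨hAB, hBA⟩ := forall_overlapAt_of_correlation_eq hℓ htop hfair
  obtain ⟨hA, hB⟩ := eq_ite_of_forall_overlapAt hℓ hAB hBA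
  refine eq_decide_of_eq_ite (fun hxy => hne (funext fun i => ?_)) hA hB
  rw [hA, hB, hxy, ite_self, ite_self]

-- `H = false`, `T = true`.
/-- Over the binary alphabet `Bool` (with `H = false`, `T = true`), if distinct words
`A ≠ B` of length `ℓ ≥ 2` satisfy `1 + θ_AA − θ_AB − θ_BA + θ_BB = 0`, then up to swapping
`A` with `B` and swapping `H` with `T`, one has `A = H T^{ℓ−1}` and `B = T^{ℓ−1} H`. -/
theorem statement17 (ℓ : ℕ) (hℓ : 2 ≤ ℓ) (A B : Fin ℓ → Bool) (hAB : A ≠ B)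
    (h : 1 + theta 2 ℓ A A - theta 2 ℓ A B - theta 2 ℓ B A + theta 2 ℓ B B = 0) :
    (A = (fun i : Fin ℓ => decide ((i : ℕ) ≠ 0)) ∧ B = (fun i : Fin ℓ => decide ((i : ℕ) ≠ ℓ - 1))) ∨
    (B = (fun i : Fin ℓ => decide ((i : ℕ) ≠ 0)) ∧ A = (fun i : Fin ℓ => decide ((i : ℕ) ≠ ℓ - 1))) ∨
    (A = (fun i : Fin ℓ => decide ((i : ℕ) = 0)) ∧ B = (fun i : Fin ℓ => decide ((i : ℕ) = ℓ - 1))) ∨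
    (B = (fun i : Fin ℓ => decide ((i : ℕ) = 0)) ∧ A = (fun i : Fin ℓ => decide ((i : ℕ) = ℓ - 1))) := by
  have hfair := correlation_eq_of_theta_eq h
  by_cases hA : OverlapAt ℓ (ℓ - 1) A B
  · rcases eq_decide_of_correlation_eq hℓ hAB hA hfair with hshape | hshape
    · exact .inl hshape
    · exact .inr (.inr (.inl hshape))
  by_cases hB : OverlapAt ℓ (ℓ - 1) B A
  · rcases eq_decide_of_correlation_eq hℓ hAB.symm hB (by omega) with hshape | hshape
    · exact .inr (.inl hshape)
    · exact .inr (.inr (.inr hshape))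
  have hA' := correlation_add_two_le_of_not_overlapAt_pred hℓ hA
  have hB' := correlation_add_two_le_of_not_overlapAt_pred hℓ hB
  have hpow : 2 ^ ℓ = 2 * 2 ^ (ℓ - 1) := by rw [← pow_succ', Nat.sub_add_cancel (by omega)]
  omega
end

section
/- Let P be an irreducible stochastic matrix on finite W with stationary distribution π, and let B ∈ W. Let P_{≠B} be P with the column of B set to zero. Then I − P_{≠B} is invertible and ((I − P_{≠B})^{-1})_{ij} = Q_{ij} + (Q_{BB} + (I−Q)_{iB})·π_j/π_B − Q_{Bj}, where Q := (I−P)^#. -/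
/-!
The columns of `E = 1 - (1 - P) Q` are `P`-harmonic, because `(1 - P) (1 - P) Q = (1 - P) Q (1 - P)
= 1 - P`; by the maximum principle for an irreducible chain they are constant, and `π E = π` pins
the constants down, so `(1 - P) Q = 1 - 𝟙 π`. Since `1 - P_{≠B} = (1 - P) + P e_B e_Bᵀ`, and row `B`
of the claimed inverse `M` is `π / π_B`, a direct computation gives
`(1 - P_{≠B}) M = (1 - P e_B π / π_B) + P e_B π / π_B = 1`.
-/

open Finset Matrix

section

variable {W : Type*} [Fintype W] [DecidableEq W]

theorem Matrix.pow_mulVec_eq_self {R : Type*} [Semiring R] {P : Matrix W W R} {x : W → R}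
    (hx : P *ᵥ x = x) (n : ℕ) : P ^ n *ᵥ x = x := by
  induction n with
  | zero => rw [pow_zero, one_mulVec]
  | succ n ih => rw [pow_succ, ← mulVec_mulVec, hx, ih]

theorem Matrix.vecMul_pow_eq_self {R : Type*} [Semiring R] {P : Matrix W W R} {x : W → R}
    (hx : x ᵥ* P = x) (n : ℕ) : x ᵥ* P ^ n = x := by
  induction n with
  | zero => rw [pow_zero, vecMul_one]
  | succ n ih => rw [pow_succ, ← vecMul_vecMul, ih, hx]

variable {P : Matrix W W ℝ}

theorem eq_of_mulVec_eq_self_of_irreducible (hP : P ∈ rowStochastic ℝ W)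
    (hirr : ∀ i j, ∃ n : ℕ, 0 < (P ^ n) i j) {x : W → ℝ} (hx : P *ᵥ x = x) (i j : W) :
    x i = x j := by
  obtain ⟨m, -, hm⟩ := exists_max_image univ x ⟨i, mem_univ i⟩
  suffices h : ∀ j, x j = x m by rw [h i, h j]
  intro j
  obtain ⟨n, hpos⟩ := hirr m j
  have hPn : P ^ n ∈ rowStochastic ℝ W := pow_mem hP n
  have hsum : ∑ k, (P ^ n) m k * (x m - x k) = 0 := by
    have hfix := congrFun (pow_mulVec_eq_self hx n) m
    simp only [mulVec, dotProduct] at hfix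
    simp only [mul_sub, sum_sub_distrib, ← sum_mul, sum_row_of_mem_rowStochastic hPn, hfix]
    ring
  have hterm := (sum_eq_zero_iff_of_nonneg fun k _ =>
    mul_nonneg (nonneg_of_mem_rowStochastic hPn) (sub_nonneg.2 (hm k (mem_univ k)))).1
    hsum j (mem_univ j)
  linarith [(mul_eq_zero.1 hterm).resolve_left hpos.ne']

theorem pos_of_vecMul_eq_self_of_irreducible (hP : ∀ i j, 0 ≤ P i j)
    (hirr : ∀ i j, ∃ n : ℕ, 0 < (P ^ n) i j) {π : W → ℝ} (hπnn : ∀ i, 0 ≤ π i) (hπ : π ≠ 0)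
    (hstat : π ᵥ* P = π) (j : W) : 0 < π j := by
  obtain ⟨i, hi⟩ := Function.ne_iff.1 hπ
  obtain ⟨n, hpos⟩ := hirr i j
  calc 0 < π i * (P ^ n) i j := mul_pos ((hπnn i).lt_of_ne' hi) hpos
    _ ≤ ∑ k, π k * (P ^ n) k j :=
        single_le_sum (fun k _ => mul_nonneg (hπnn k) (pow_apply_nonneg hP n k j)) (mem_univ i)
    _ = π j := congrFun (vecMul_pow_eq_self hstat n) j

theorem one_sub_mul_eq_of_isGroupInverse (hP : P ∈ rowStochastic ℝ W)
    (hirr : ∀ i j, ∃ n : ℕ, 0 < (P ^ n) i j) {π : W → ℝ} (hπ1 : ∑ i, π i = 1)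
    (hstat : π ᵥ* P = π) {Q : Matrix W W ℝ} (h1 : (1 - P) * Q = Q * (1 - P))
    (h2 : (1 - P) * Q * (1 - P) = 1 - P) :
    (1 - P) * Q = 1 - of fun _ j => π j := by
  set E := 1 - (1 - P) * Q with hE
  have hPE : P * E = E := by
    have hker : (1 - P) * E = 0 := by
      have hidem : (1 - P) * ((1 - P) * Q) = 1 - P := by rw [h1, ← mul_assoc, h2]
      rw [hE, mul_sub, mul_one, hidem, sub_self]
    rw [sub_mul, one_mul, sub_eq_zero] at hker
    exact hker.symm
  have hπE : π ᵥ* E = π := by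
    have hπker : π ᵥ* (1 - P) = 0 := by rw [vecMul_sub, vecMul_one, hstat, sub_self]
    rw [hE, vecMul_sub, vecMul_one, ← vecMul_vecMul, hπker, zero_vecMul, sub_zero]
  have hcol : ∀ i j, E i j = π j := fun i j => calc
    E i j = ∑ k, π k * E i j := by rw [← sum_mul, hπ1, one_mul]
    _ = ∑ k, π k * E k j := by
        congr! 2 with k
        exact eq_of_mulVec_eq_self_of_irreducible hP hirr (x := fun k => E k j)
          (funext fun k => congrFun (congrFun hPE k) j) i k
    _ = π j := congrFun hπE j
  rw [← sub_sub_cancel 1 ((1 - P) * Q), ← hE]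
  ext i j
  simp [hcol]

theorem one_sub_updateCol_mul_eq_one (hrow : ∀ i, ∑ j, P i j = 1) {π : W → ℝ} {Q : Matrix W W ℝ}
    (hQ : (1 - P) * Q = 1 - of fun _ j => π j) {B : W} (hπB : π B ≠ 0) :
    (1 - P.updateCol B 0) *
      of (fun i j => Q i j + (Q B B + (1 - Q) i B) * π j / π B - Q B j) = 1 := by
  set A := 1 - P.updateCol B 0
  have hA : ∀ i k, A i k = (1 - P) i k + if k = B then P i B else 0 := by
    intro i k
    by_cases hk : k = B <;> simp [A, hk]
  have hAB : ∀ i, A i B = (1 : Matrix W W ℝ) i B := by simp [A]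
  have hrowA : ∀ i, ∑ k, A i k = P i B := by
    intro i
    simp [hA, sum_add_distrib, Matrix.sub_apply, one_apply, hrow]
  have hAQ : ∀ i j, (A * Q) i j = (1 : Matrix W W ℝ) i j - π j + P i B * Q B j := by
    intro i j
    rw [mul_apply]
    simp only [hA, add_mul, sum_add_distrib, ite_mul, zero_mul, sum_ite_eq', mem_univ, if_true]
    rw [← mul_apply, hQ]
    simp
  ext i j
  calc _ = (A * Q) i j + (Q B B * ∑ k, A i k + A i B - (A * Q) i B) * (π j / π B)
        - (∑ k, A i k) * Q B j := by
        simp only [mul_apply, of_apply, Matrix.sub_apply, mul_div_assoc, mul_sub, mul_add,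
          sum_sub_distrib, sum_add_distrib, ← sum_mul, ← mul_sum, ← mul_assoc, mul_comm _ (Q B B),
          one_apply, mul_ite, mul_one, mul_zero, sum_ite_eq', mem_univ, if_true]
        ring
    _ = (1 : Matrix W W ℝ) i j := by
        rw [hAQ, hAQ, hrowA, hAB]
        field_simp
        ring

end

theorem statement18_general {W : Type*} [Fintype W] [DecidableEq W] (P : Matrix W W ℝ)
    (hnn : ∀ i j, 0 ≤ P i j) (hrow : ∀ i, ∑ j, P i j = 1)
    (hirr : ∀ i j, ∃ n : ℕ, 1 ≤ n ∧ 0 < (P ^ n) i j)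
    (π : W → ℝ) (hπnn : ∀ i, 0 ≤ π i) (hπ1 : ∑ i, π i = 1)
    (hstat : ∀ j, ∑ i, π i * P i j = π j)
    (Q : Matrix W W ℝ)
    (h1 : (1 - P) * Q = Q * (1 - P))
    (h2 : (1 - P) * Q * (1 - P) = 1 - P)
    (B : W) :
    IsUnit (1 - Matrix.of (fun i j => if j = B then 0 else P i j)) ∧
    ∀ i j, (1 - Matrix.of (fun i j => if j = B then (0:ℝ) else P i j))⁻¹ i j =
      Q i j + (Q B B + (1 - Q) i B) * π j / π B - Q B j := by
  have hP : P ∈ rowStochastic ℝ W := mem_rowStochastic_iff_sum.2 ⟨hnn, hrow⟩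
  have hirr' : ∀ i j, ∃ n : ℕ, 0 < (P ^ n) i j := fun i j => (hirr i j).imp fun _ => And.right
  have hstat' : π ᵥ* P = π := funext hstat
  have hπ : π ≠ 0 := fun h => by simp [h] at hπ1
  have hπB := (pos_of_vecMul_eq_self_of_irreducible hnn hirr' hπnn hπ hstat' B).ne'
  have hQ := one_sub_mul_eq_of_isGroupInverse hP hirr' hπ1 hstat' h1 h2
  have hcol : Matrix.of (fun i j => if j = B then (0:ℝ) else P i j) = P.updateCol B 0 := by
    ext i j
    simp [updateCol_apply]
  have hinv := one_sub_updateCol_mul_eq_one hrow hQ hπB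
  rw [hcol]
  exact ⟨(isUnit_iff_isUnit_det _).2 (isUnit_det_of_right_inverse hinv),
    fun i j => by rw [inv_eq_right_inv hinv, of_apply]⟩

/-- Lemma on the inverse of `I - P_{≠B}`, where `P_{≠B}` is `P` with the column of `B`
set to zero: `I - P_{≠B}` is invertible and
`(I - P_{≠B})⁻¹_{ij} = Q_{ij} + (Q_{BB} + (I-Q)_{iB}) π_j/π_B - Q_{Bj}`,
where `Q = (I-P)^#` is the group inverse. -/
theorem statement18 {W : Type*} [Fintype W] [DecidableEq W] (P : Matrix W W ℝ)
    (hnn : ∀ i j, 0 ≤ P i j) (hrow : ∀ i, ∑ j, P i j = 1)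
    (hirr : ∀ i j, ∃ n : ℕ, 1 ≤ n ∧ 0 < (P ^ n) i j)
    (π : W → ℝ) (hπnn : ∀ i, 0 ≤ π i) (hπ1 : ∑ i, π i = 1)
    (hstat : ∀ j, ∑ i, π i * P i j = π j)
    (Q : Matrix W W ℝ)
    (h1 : (1 - P) * Q = Q * (1 - P))
    (h2 : (1 - P) * Q * (1 - P) = 1 - P)
    (h3 : Q * (1 - P) * Q = Q)
    (B : W) :
    IsUnit (1 - Matrix.of (fun i j => if j = B then 0 else P i j)) ∧
    ∀ i j, (1 - Matrix.of (fun i j => if j = B then (0:ℝ) else P i j))⁻¹ i j =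
      Q i j + (Q B B + (1 - Q) i B) * π j / π B - Q B j :=
  statement18_general P hnn hrow hirr π hπnn hπ1 hstat Q h1 h2 B
end

section
/- For A = HT^{ℓ−1} and B = T^{ℓ−1}H (ℓ ≥ 2) in a fair coin sequence, the net score satisfies Ŝ_n = 1{ξ_n = T-run of length ≥ ℓ−1 in progress} − 1{run at start}, and in particular Ŝ_n ∈ {−1, 0, 1} deterministically for all n; for the case ℓ = 2 (A = HT, B = TH), Ŝ_n = 1{ξ_n = T} − 1{ξ_1 = T}. -/
/-!
Write `R k` for "`ξ_k, …, ξ_{k+ℓ-2}` are all `T`". An occurrence of `H T^{ℓ-1}` at `k` is exactly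
`¬ R k ∧ R (k+1)` and an occurrence of `T^{ℓ-1} H` at `k` is exactly `R k ∧ ¬ R (k+1)`, so the
contribution of position `k` to the net score is `[R (k+1)] - [R k]` and the net score telescopes
to `[R (n-ℓ+2)] - [R 1]`. For `ℓ = 2`, `R k` is just `ξ_k = T`.
-/

/-- The net score `Ŝ_n` of Litt's game for `A = H T^{ℓ-1}` and `B = T^{ℓ-1} H` on the coin
sequence `ξ_1, ξ_2, …` (with `H = false`, `T = true`): the number of occurrences of `A` in
`ξ_1 ⋯ ξ_n` minus the number of occurrences of `B`. -/
def netScore (ℓ : ℕ) (ξ : ℕ → Bool) (n : ℕ) : ℤ :=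
  (∑ k ∈ Finset.Icc 1 (n + 1 - ℓ),
      if ∀ i : Fin ℓ, ξ (k + i) = decide ((i : ℕ) ≠ 0) then (1 : ℤ) else 0) -
  ∑ k ∈ Finset.Icc 1 (n + 1 - ℓ),
      if ∀ i : Fin ℓ, ξ (k + i) = decide ((i : ℕ) ≠ ℓ - 1) then (1 : ℤ) else 0

def TailsRun (ξ : ℕ → Bool) (m k : ℕ) : Prop :=
  ∀ i : Fin m, ξ (k + i) = true

namespace TailsRun

variable {ξ : ℕ → Bool} {m k : ℕ}

instance : Decidable (TailsRun ξ m k) := Nat.decidableForallFin _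

theorem one_iff : TailsRun ξ 1 k ↔ ξ k = true := by
  simp [TailsRun]

theorem succ_iff_head : TailsRun ξ (m + 1) k ↔ ξ k = true ∧ TailsRun ξ m (k + 1) := by
  simp only [TailsRun, Fin.forall_fin_succ, Fin.val_zero, Fin.val_succ, add_zero, add_assoc,
    add_comm 1]

theorem succ_iff_last : TailsRun ξ (m + 1) k ↔ TailsRun ξ m k ∧ ξ (k + m) = true := by
  simp only [TailsRun, Fin.forall_fin_succ', Fin.val_castSucc, Fin.val_last]

theorem iff_head_of_succ (h : TailsRun ξ (m + 1) (k + 1)) :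
    TailsRun ξ (m + 1) k ↔ ξ k = true := by
  rw [succ_iff_head, and_iff_left_iff_imp]
  exact fun _ ↦ (succ_iff_last.mp h).1

theorem iff_last_of_pred (h : TailsRun ξ (m + 1) k) :
    TailsRun ξ (m + 1) (k + 1) ↔ ξ (k + 1 + m) = true := by
  rw [succ_iff_last, and_iff_right_iff_imp]
  exact fun _ ↦ (succ_iff_head.mp h).2

end TailsRun

open TailsRun

section

variable {ξ : ℕ → Bool} {m k : ℕ}

theorem headsTails_occursAt_iff :
    (∀ i : Fin (m + 2), ξ (k + i) = decide ((i : ℕ) ≠ 0)) ↔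
      ¬ TailsRun ξ (m + 1) k ∧ TailsRun ξ (m + 1) (k + 1) := by
  have : (∀ i : Fin (m + 2), ξ (k + i) = decide ((i : ℕ) ≠ 0)) ↔
      ξ k = false ∧ TailsRun ξ (m + 1) (k + 1) := by
    simp only [TailsRun, Fin.forall_fin_succ, Fin.val_zero, Fin.val_succ, add_zero, ne_eq,
      not_true_eq_false, decide_false, Nat.add_one_ne_zero, not_false_eq_true, decide_true,
      add_assoc, add_comm 1]
  rw [this]
  exact and_congr_left fun h ↦ by rw [iff_head_of_succ h, Bool.not_eq_true]

theorem tailsHeads_occursAt_iff :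
    (∀ i : Fin (m + 2), ξ (k + i) = decide ((i : ℕ) ≠ m + 1)) ↔
      TailsRun ξ (m + 1) k ∧ ¬ TailsRun ξ (m + 1) (k + 1) := by
  have : (∀ i : Fin (m + 2), ξ (k + i) = decide ((i : ℕ) ≠ m + 1)) ↔
      TailsRun ξ (m + 1) k ∧ ξ (k + 1 + m) = false := by
    have hlt (i : Fin (m + 1)) : (i : ℕ) ≠ m + 1 := i.is_lt.ne
    rw [Fin.forall_fin_succ']
    simp only [TailsRun, Fin.val_castSucc, Fin.val_last, hlt, ne_eq, not_false_eq_true,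
      not_true_eq_false, decide_true, decide_false, add_assoc, add_comm 1]
  rw [this]
  exact and_congr_right fun h ↦ by rw [iff_last_of_pred h, Bool.not_eq_true]

theorem occurrence_sub_occurrence_eq :
    ((if ∀ i : Fin (m + 2), ξ (k + i) = decide ((i : ℕ) ≠ 0) then (1 : ℤ) else 0) -
      if ∀ i : Fin (m + 2), ξ (k + i) = decide ((i : ℕ) ≠ m + 1) then (1 : ℤ) else 0) =
    (if TailsRun ξ (m + 1) (k + 1) then 1 else 0) - if TailsRun ξ (m + 1) k then 1 else 0 := by
  simp only [headsTails_occursAt_iff, tailsHeads_occursAt_iff]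
  by_cases hk : TailsRun ξ (m + 1) k <;> by_cases hk' : TailsRun ξ (m + 1) (k + 1) <;>
    simp [hk, hk']

theorem netScore_eq (n : ℕ) :
    netScore (m + 2) ξ n =
      (if TailsRun ξ (m + 1) (n - (m + 1) + 1) then 1 else 0) -
        if TailsRun ξ (m + 1) 1 then 1 else 0 := by
  rw [netScore, ← Finset.sum_sub_distrib, show n + 1 - (m + 2) = n - (m + 1) by omega,
    ← Finset.Ico_add_one_right_eq_Icc]
  simp only [show m + 2 - 1 = m + 1 from rfl, occurrence_sub_occurrence_eq]
  exact Finset.sum_Ico_sub (fun j ↦ if TailsRun ξ (m + 1) j then (1 : ℤ) else 0)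
    (Nat.le_add_left 1 _)

end

/-- For `A = H T^{ℓ−1}` and `B = T^{ℓ−1} H`, the net score satisfies
`Ŝ_n ∈ {−1, 0, 1}` deterministically for all `n`; and for `ℓ = 2` (so `A = HT`, `B = TH`),
`Ŝ_n = 1{ξ_n = T} − 1{ξ_1 = T}`. -/
theorem statement19 (ℓ : ℕ) (hℓ : 2 ≤ ℓ) (ξ : ℕ → Bool) :
    (∀ n, netScore ℓ ξ n ∈ ({-1, 0, 1} : Set ℤ)) ∧
    (ℓ = 2 → ∀ n, 1 ≤ n → netScore ℓ ξ n =
      (if ξ n = true then (1 : ℤ) else 0) - (if ξ 1 = true then (1 : ℤ) else 0)) := by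
  obtain ⟨m, rfl⟩ : ∃ m, ℓ = m + 2 := ⟨ℓ - 2, by omega⟩
  refine ⟨fun n ↦ ?_, fun hm n hn ↦ ?_⟩
  · rw [netScore_eq]
    split_ifs <;> simp
  · obtain rfl : m = 0 := by omega
    rw [netScore_eq, Nat.sub_add_cancel hn]
    simp only [zero_add, TailsRun.one_iff]
end
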